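/- arXiv:1801.09826 — 10 statements merged into one kernel-verified Lean document; each statement's English description precedes it below -/
import Mathlib

section
/- Let G be a group, ρ1, ρ2 : G → SL(2,ℝ) group homomorphisms, and o1, o2 ∈ ℍ base points. Then the set {(a, b) ∈ ℝ² : the family γ ↦ exp(−(a·d1(γ) + b·d2(γ))) is summable over G} is a convex subset of ℝ². (Convexity of the region bounded by the Manhattan curve.) -/
open scoped MatrixGroups UpperHalfPlane

/-- The orbital displacement `γ ↦ dist(o, ρ(γ)·o)` in the hyperbolic plane. -/
noncomputable def dOrb {G : Type*} [Group G] (ρ : G →* SL(2, ℝ)) (o : ℍ) (γ : G) : ℝ :=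
  dist o (ρ γ • o)

/-- The region `{(a,b) : the weighted Poincaré series converges}` bounded by the
Manhattan curve is convex. -/
theorem manhattan_region_convex (G : Type*) [Group G]
    (ρ1 ρ2 : G →* SL(2, ℝ)) (o1 o2 : ℍ) :
    Convex ℝ {p : ℝ × ℝ |
      Summable fun γ : G =>
        Real.exp (-(p.1 * dOrb ρ1 o1 γ + p.2 * dOrb ρ2 o2 γ))} := by
  intro x hx y hy a b ha hb hab
  simp only [Set.mem_setOf_eq] at hx hy ⊢
  refine Summable.of_nonneg_of_le (fun γ => (Real.exp_pos _).le) ?_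
    ((hx.mul_left a).add (hy.mul_left b))
  · intro γ
    set u := -(x.1 * dOrb ρ1 o1 γ + x.2 * dOrb ρ2 o2 γ) with hu
    set v := -(y.1 * dOrb ρ1 o1 γ + y.2 * dOrb ρ2 o2 γ) with hv
    have hkey : -((a • x + b • y).1 * dOrb ρ1 o1 γ + (a • x + b • y).2 * dOrb ρ2 o2 γ)
        = u * a + v * b := by
      simp only [hu, hv, Prod.fst_add, Prod.snd_add, Prod.smul_fst, Prod.smul_snd,
        smul_eq_mul]
      ring
    rw [hkey, Real.exp_add, Real.exp_mul, Real.exp_mul]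
    exact Real.geom_mean_le_arith_mean2_weighted ha hb (Real.exp_pos u).le
      (Real.exp_pos v).le hab
end

section
/- Let G be a group, ρ1, ρ2 : G → SL(2,ℝ) group homomorphisms, and o1, o2 ∈ ℍ. For every t ∈ [0,1] and all pairs (a1,b1), (a2,b2) ∈ ℝ², with sums taken in [0,∞]: ∑_{γ∈G} exp(−((t·a1+(1−t)·a2)·d1(γ) + (t·b1+(1−t)·b2)·d2(γ))) ≤ (∑_{γ∈G} exp(−(a1·d1(γ)+b1·d2(γ))))^t · (∑_{γ∈G} exp(−(a2·d1(γ)+b2·d2(γ))))^{1−t}. (Hölder inequality for the weighted Poincaré series.) -/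
open scoped MatrixGroups UpperHalfPlane ENNReal

/-- Hölder inequality for the weighted Poincaré series. -/
theorem poincare_series_holder (G : Type*) [Group G]
    (ρ1 ρ2 : G →* SL(2, ℝ)) (o1 o2 : ℍ)
    (t : ℝ) (ht0 : 0 ≤ t) (ht1 : t ≤ 1) (a1 b1 a2 b2 : ℝ) :
    (∑' γ : G, ENNReal.ofReal (Real.exp
        (-((t * a1 + (1 - t) * a2) * dOrb ρ1 o1 γ
            + (t * b1 + (1 - t) * b2) * dOrb ρ2 o2 γ))))
      ≤ (∑' γ : G, ENNReal.ofReal (Real.exp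
            (-(a1 * dOrb ρ1 o1 γ + b1 * dOrb ρ2 o2 γ)))) ^ t
        * (∑' γ : G, ENNReal.ofReal (Real.exp
            (-(a2 * dOrb ρ1 o1 γ + b2 * dOrb ρ2 o2 γ)))) ^ (1 - t) := by
  rcases eq_or_lt_of_le ht0 with h0 | h0
  · simp only [← h0, zero_mul, sub_zero, one_mul, zero_add, ENNReal.rpow_zero, ENNReal.rpow_one]
    exact le_of_eq (by norm_num)
  rcases eq_or_lt_of_le ht1 with h1 | h1
  · simp only [h1, one_mul, sub_self, zero_mul, add_zero, ENNReal.rpow_one, ENNReal.rpow_zero]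
    exact le_of_eq (by norm_num)
  -- now 0 < t < 1
  set X : G → ℝ := fun γ => a1 * dOrb ρ1 o1 γ + b1 * dOrb ρ2 o2 γ with hX
  set Y : G → ℝ := fun γ => a2 * dOrb ρ1 o1 γ + b2 * dOrb ρ2 o2 γ with hY
  have key : ∀ γ : G, ENNReal.ofReal (Real.exp
      (-((t * a1 + (1 - t) * a2) * dOrb ρ1 o1 γ
          + (t * b1 + (1 - t) * b2) * dOrb ρ2 o2 γ)))
      = ENNReal.ofReal (Real.exp (-(X γ))) ^ t * ENNReal.ofReal (Real.exp (-(Y γ))) ^ (1 - t) := by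
    intro γ
    have harg : -((t * a1 + (1 - t) * a2) * dOrb ρ1 o1 γ
        + (t * b1 + (1 - t) * b2) * dOrb ρ2 o2 γ) = (-(X γ)) * t + (-(Y γ)) * (1 - t) := by
      simp only [hX, hY]; ring
    rw [harg, Real.exp_add, Real.exp_mul, Real.exp_mul,
      ENNReal.ofReal_mul (Real.rpow_nonneg (Real.exp_pos _).le _),
      ENNReal.ofReal_rpow_of_pos (Real.exp_pos _),
      ENNReal.ofReal_rpow_of_pos (Real.exp_pos _)]
  simp only [key]
  letI : MeasurableSpace G := ⊤
  haveI : MeasurableSingletonClass G := ⟨fun _ => trivial⟩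
  rw [← MeasureTheory.lintegral_count, ← MeasureTheory.lintegral_count,
    ← MeasureTheory.lintegral_count]
  have hpq : (1 / t).HolderConjugate (1 / (1 - t)) := by
    refine ⟨?_, one_div_pos.mpr h0, one_div_pos.mpr (by linarith)⟩
    · rw [one_div, one_div, inv_inv, inv_inv]; ring
  have ht : t ≠ 0 := h0.ne'
  have ht' : (1 : ℝ) - t ≠ 0 := by linarith
  calc ∫⁻ γ, (ENNReal.ofReal (Real.exp (-(X γ))) ^ t
        * ENNReal.ofReal (Real.exp (-(Y γ))) ^ (1 - t)) ∂MeasureTheory.Measure.count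
      ≤ (∫⁻ γ, (ENNReal.ofReal (Real.exp (-(X γ))) ^ t) ^ (1 / t)
          ∂MeasureTheory.Measure.count) ^ (1 / (1 / t))
        * (∫⁻ γ, (ENNReal.ofReal (Real.exp (-(Y γ))) ^ (1 - t)) ^ (1 / (1 - t))
          ∂MeasureTheory.Measure.count) ^ (1 / (1 / (1 - t))) :=
        ENNReal.lintegral_mul_le_Lp_mul_Lq _ hpq
          measurable_from_top.aemeasurable measurable_from_top.aemeasurable
    _ = _ := by
        rw [one_div_one_div, one_div_one_div]
        congr 1
        · congr 1
          refine MeasureTheory.lintegral_congr fun γ => ?_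
          rw [← ENNReal.rpow_mul, mul_one_div, div_self ht, ENNReal.rpow_one]
        · congr 1
          refine MeasureTheory.lintegral_congr fun γ => ?_
          rw [← ENNReal.rpow_mul, mul_one_div, div_self ht', ENNReal.rpow_one]
end

section
/- Let p ∈ SL(2,ℝ) be parabolic and z ∈ ℍ. Then there exist real constants m ≤ M and N ∈ ℕ such that for every n ∈ ℤ with |n| > N, one has 2·log|n| + m ≤ dist(z, pⁿ·z) ≤ 2·log|n| + M. (Logarithmic growth of parabolic orbital displacements.) -/
open scoped MatrixGroups UpperHalfPlane

/-- An element of `SL(2,ℝ)` is parabolic if its trace squared is 4 and it is not `±I`. -/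
def IsParabolic (p : SL(2, ℝ)) : Prop :=
  (Matrix.trace (p : Matrix (Fin 2) (Fin 2) ℝ)) ^ 2 = 4 ∧
    (p : Matrix (Fin 2) (Fin 2) ℝ) ≠ 1 ∧ (p : Matrix (Fin 2) (Fin 2) ℝ) ≠ -1

lemma parab_pow_coe_nat (q : SL(2, ℝ)) (a b c : ℝ) (hrel : a ^ 2 + b * c = 0)
    (hq : (q : Matrix (Fin 2) (Fin 2) ℝ) = !![1 + a, b; c, 1 - a]) (k : ℕ) :
    ((q ^ k : SL(2, ℝ)) : Matrix (Fin 2) (Fin 2) ℝ) =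
      !![1 + k * a, k * b; k * c, 1 - k * a] := by
  induction k with
  | zero => simp [Matrix.one_fin_two]
  | succ k ih =>
    rw [pow_succ, Matrix.SpecialLinearGroup.coe_mul, ih, hq, Matrix.mul_fin_two]
    push_cast
    ext i j
    fin_cases i <;> fin_cases j <;>
      simp [Matrix.cons_val_zero, Matrix.cons_val_one] <;> nlinarith [hrel]

lemma parab_pow_coe_int (q : SL(2, ℝ)) (a b c : ℝ) (hrel : a ^ 2 + b * c = 0)
    (hq : (q : Matrix (Fin 2) (Fin 2) ℝ) = !![1 + a, b; c, 1 - a]) (n : ℤ) :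
    ((q ^ n : SL(2, ℝ)) : Matrix (Fin 2) (Fin 2) ℝ) =
      !![1 + n * a, n * b; n * c, 1 - n * a] := by
  have hinv : ((q⁻¹ : SL(2, ℝ)) : Matrix (Fin 2) (Fin 2) ℝ) =
      !![1 + (-a), -b; -c, 1 - (-a)] := by
    rw [Matrix.SpecialLinearGroup.coe_inv, hq, Matrix.adjugate_fin_two]
    norm_num
    ring_nf
  cases n with
  | ofNat k =>
    rw [Int.ofNat_eq_coe, zpow_natCast, parab_pow_coe_nat q a b c hrel hq k]
    push_cast; ring_nf
  | negSucc k =>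
    rw [zpow_negSucc, ← inv_pow,
      parab_pow_coe_nat q⁻¹ (-a) (-b) (-c) (by nlinarith) hinv (k + 1)]
    push_cast; ring_nf

lemma parab_dist_formula (g : SL(2, ℝ)) (α β γ δ : ℝ)
    (hg : (g : Matrix (Fin 2) (Fin 2) ℝ) = !![α, β; γ, δ])
    (hdet : α * δ - β * γ = 1) (z : ℍ) :
    dist z (g • z) = 2 * Real.arsinh
      (‖γ * (z:ℂ)^2 + (δ - α) * z - β‖ / (2 * z.im)) := by
  have e00 : (g 0 0 : ℝ) = α := by show (g : Matrix (Fin 2) (Fin 2) ℝ) 0 0 = α; rw [hg]; norm_num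
  have e01 : (g 0 1 : ℝ) = β := by show (g : Matrix (Fin 2) (Fin 2) ℝ) 0 1 = β; rw [hg]; norm_num
  have e10 : (g 1 0 : ℝ) = γ := by show (g : Matrix (Fin 2) (Fin 2) ℝ) 1 0 = γ; rw [hg]; norm_num
  have e11 : (g 1 1 : ℝ) = δ := by show (g : Matrix (Fin 2) (Fin 2) ℝ) 1 1 = δ; rw [hg]; norm_num
  have hy : 0 < z.im := z.im_pos
  set D : ℂ := (γ : ℂ) * z + δ with hD
  have hDne : D ≠ 0 := by
    intro h
    have him := congrArg Complex.im h
    have hre := congrArg Complex.re h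
    simp [hD, Complex.add_im, Complex.mul_im, Complex.add_re, Complex.mul_re,
      UpperHalfPlane.coe_im, UpperHalfPlane.coe_re] at him hre
    have hγ : γ = 0 := him.resolve_right hy.ne'
    rw [hγ] at hre
    simp at hre
    rw [hγ, hre] at hdet
    norm_num at hdet
  have hw : ((g • z : ℍ) : ℂ) = ((α : ℂ) * z + β) / D := by
    rw [show ((g • z : ℍ) : ℂ) =
      ((g 0 0 : ℝ) * z + (g 0 1 : ℝ)) / ((g 1 0 : ℝ) * z + (g 1 1 : ℝ)) from UpperHalfPlane.coe_specialLinearGroup_apply g z,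
      e00, e01, e10, e11]
  have hsub : (z : ℂ) - ((g • z : ℍ) : ℂ) = (γ * (z:ℂ)^2 + (δ - α) * z - β) / D := by
    rw [hw]; field_simp [hD]; ring
  have hnormSq : Complex.normSq D ≠ 0 := by simpa using hDne
  have himw : (g • z : ℍ).im = z.im / Complex.normSq D := by
    rw [← UpperHalfPlane.coe_im, hw, Complex.div_im, Complex.normSq_apply]
    have hDre : D.re = γ * z.re + δ := by
      simp [hD, Complex.add_re, Complex.mul_re, UpperHalfPlane.coe_re, UpperHalfPlane.coe_im]
    have hDim : D.im = γ * z.im := by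
      simp [hD, Complex.add_im, Complex.mul_im, UpperHalfPlane.coe_re, UpperHalfPlane.coe_im]
    rw [Complex.normSq_apply] at hnormSq
    rw [hDre, hDim]
    simp only [Complex.add_im, Complex.add_re, Complex.mul_re, Complex.mul_im,
      Complex.ofReal_re, Complex.ofReal_im, UpperHalfPlane.coe_re, UpperHalfPlane.coe_im]
    rw [hDre, hDim] at hnormSq
    field_simp
    congr 1
    linear_combination z.im * hdet
  rw [UpperHalfPlane.dist_eq, Complex.dist_eq, hsub, himw]
  congr 1
  have habsD : ‖D‖ ≠ 0 := by simpa using hDne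
  have h1 : Real.sqrt (z.im * (z.im / Complex.normSq D)) = z.im / ‖D‖ := by
    rw [show z.im * (z.im / Complex.normSq D) = z.im ^ 2 / Complex.normSq D by ring,
      Real.sqrt_div (sq_nonneg _), Real.sqrt_sq hy.le, ← Complex.norm_def]
  rw [norm_div, h1]
  field_simp

lemma parab_quad_ne (a b c : ℝ) (hrel : a ^ 2 + b * c = 0)
    (habc : ¬(a = 0 ∧ b = 0 ∧ c = 0)) (z : ℍ) :
    (c : ℂ) * (z : ℂ) ^ 2 - 2 * a * z - b ≠ 0 := by
  intro h
  set x := z.re with hx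
  set y := z.im with hyy
  have hy : y ≠ 0 := z.im_pos.ne'
  have him := congrArg Complex.im h
  have hre := congrArg Complex.re h
  simp only [Complex.sub_im, Complex.sub_re, Complex.mul_im, Complex.mul_re, Complex.zero_im,
    Complex.zero_re, Complex.ofReal_re, Complex.ofReal_im, pow_two,
    UpperHalfPlane.coe_re, UpperHalfPlane.coe_im, Complex.re_ofNat, Complex.im_ofNat,
    ← hx, ← hyy] at him hre
  have hre0 : c * x ^ 2 - c * y ^ 2 - 2 * a * x - b = 0 := by linear_combination hre
  have him0 : (c * x - a) * (2 * y) = 0 := by linear_combination him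
  have hca0 : c * x - a = 0 := by
    rcases mul_eq_zero.mp him0 with h' | h'
    · exact h'
    · exact absurd (by linarith : y = 0) hy
  have h1 : c ^ 2 * y ^ 2 = 0 := by
    linear_combination (-c) * hre0 - hrel + (c * x - a) * hca0
  have hc : c = 0 := by
    rcases mul_eq_zero.mp h1 with h' | h'
    · exact pow_eq_zero_iff two_ne_zero |>.mp h'
    · exact absurd (pow_eq_zero_iff two_ne_zero |>.mp h') hy
  have ha : a = 0 := by rw [hc] at hca0; linarith
  have hb : b = 0 := by rw [hc, ha] at hre0; linarith
  exact habc ⟨ha, hb, hc⟩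

lemma parab_core (q : SL(2, ℝ)) (a b c : ℝ) (hrel : a ^ 2 + b * c = 0)
    (hq : (q : Matrix (Fin 2) (Fin 2) ℝ) = !![1 + a, b; c, 1 - a]) (z : ℍ) (n : ℤ) :
    dist z (q ^ n • z) = 2 * Real.arsinh
      (|(n : ℝ)| * ‖(c : ℂ) * (z : ℂ) ^ 2 - 2 * a * z - b‖ / (2 * z.im)) := by
  have hdet : (1 + (n:ℝ) * a) * (1 - (n:ℝ) * a) - ((n:ℝ) * b) * ((n:ℝ) * c) = 1 := by
    linear_combination (-(n:ℝ) ^ 2) * hrel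
  rw [parab_dist_formula (q ^ n) (1 + n * a) (n * b) (n * c) (1 - n * a)
    (parab_pow_coe_int q a b c hrel hq n) hdet z]
  have : ‖(((n:ℝ) * c : ℝ) : ℂ) * (z:ℂ) ^ 2 +
        (((1 - (n:ℝ) * a : ℝ) : ℂ) - ((1 + (n:ℝ) * a : ℝ) : ℂ)) * z - (((n:ℝ) * b : ℝ) : ℂ)‖ =
      |(n : ℝ)| * ‖(c : ℂ) * (z : ℂ) ^ 2 - 2 * a * z - b‖ := by
    rw [show ((((n:ℝ) * c : ℝ) : ℂ) * (z:ℂ) ^ 2 +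
        (((1 - (n:ℝ) * a : ℝ) : ℂ) - ((1 + (n:ℝ) * a : ℝ) : ℂ)) * z - (((n:ℝ) * b : ℝ) : ℂ)) =
      (((n:ℝ) : ℂ)) * ((c : ℂ) * (z : ℂ) ^ 2 - 2 * a * z - b) by push_cast; ring,
      norm_mul, Complex.norm_real, Real.norm_eq_abs]
  rw [this]

theorem parabolic_neg_one_smul (z : ℍ) : ((-1 : SL(2, ℝ)) • z) = z := by
  have : ((((-1 : SL(2,ℝ)) • z : ℍ)) : ℂ) =
      (((-1 : SL(2,ℝ)) 0 0 : ℝ) * z + ((-1 : SL(2,ℝ)) 0 1 : ℝ)) /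
        (((-1 : SL(2,ℝ)) 1 0 : ℝ) * z + ((-1 : SL(2,ℝ)) 1 1 : ℝ)) := UpperHalfPlane.coe_specialLinearGroup_apply _ z
  have e : ∀ i j : Fin 2, ((-1 : SL(2,ℝ)) i j : ℝ) = (-1 : Matrix (Fin 2) (Fin 2) ℝ) i j := by
    intro i j
    show ((-1 : SL(2,ℝ)) : Matrix (Fin 2) (Fin 2) ℝ) i j = _
    norm_num
  ext
  rw [this]
  simp only [e]
  simp [Matrix.one_apply, div_eq_iff]

theorem parabolic_neg_one_zpow_smul (n : ℤ) (z : ℍ) : ((-1 : SL(2, ℝ)) ^ n) • z = z := by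
  have heven : ∀ k : ℤ, ((-1 : SL(2, ℝ)) ^ (k + k)) = 1 := by
    intro k
    have h := (Commute.refl (-1 : SL(2, ℝ))).mul_zpow k
    rw [zpow_add, ← h, neg_one_mul, neg_neg, one_zpow]
  rcases Int.even_or_odd n with ⟨k, hk⟩ | ⟨k, hk⟩
  · rw [hk, heven, one_smul]
  · rw [hk, show 2 * k + 1 = k + k + 1 by ring, zpow_add, heven, one_mul, zpow_one,
      parabolic_neg_one_smul]

/-- Logarithmic growth of the orbital displacements of a parabolic element. -/
theorem parabolic_orbit_log_growth (p : SL(2, ℝ)) (hp : IsParabolic p) (z : ℍ) :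
    ∃ m M : ℝ, m ≤ M ∧ ∃ N : ℕ, ∀ n : ℤ, (N : ℤ) < |n| →
      2 * Real.log |(n : ℝ)| + m ≤ dist z (p ^ n • z) ∧
        dist z (p ^ n • z) ≤ 2 * Real.log |(n : ℝ)| + M := by
  obtain ⟨htr, hp1, hpm1⟩ := hp
  rw [Matrix.trace_fin_two] at htr
  -- choose q = ± p with trace 2
  have hdetp := p.prop
  rw [Matrix.det_fin_two] at hdetp
  obtain ⟨q, hqsmul, a, b, c, hq, hrel, habc⟩ :
      ∃ q : SL(2, ℝ), (∀ n : ℤ, p ^ n • z = q ^ n • z) ∧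
        ∃ a b c : ℝ, (q : Matrix (Fin 2) (Fin 2) ℝ) = !![1 + a, b; c, 1 - a] ∧
          a ^ 2 + b * c = 0 ∧ ¬(a = 0 ∧ b = 0 ∧ c = 0) := by
    have h2 : (p 0 0 : ℝ) + p 1 1 = 2 ∨ (p 0 0 : ℝ) + p 1 1 = -2 := by
      have hfac : ((p 0 0 : ℝ) + p 1 1 - 2) * ((p 0 0 : ℝ) + p 1 1 + 2) = 0 := by
        linear_combination htr
      rcases mul_eq_zero.mp hfac with h | h
      · left; linarith
      · right; linarith
    rcases h2 with h2 | h2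
    · refine ⟨p, fun n => rfl, p 0 0 - 1, p 0 1, p 1 0, ?_, by nlinarith [hdetp], ?_⟩
      · ext i j
        fin_cases i <;> fin_cases j <;>
          simp [Matrix.cons_val_zero, Matrix.cons_val_one] <;> linarith [h2]
      · rintro ⟨ha, hb, hc⟩
        apply hp1
        ext i j
        fin_cases i <;> fin_cases j <;>
          simp [Matrix.one_fin_two, Matrix.cons_val_zero, Matrix.cons_val_one] <;> linarith [h2]
    · refine ⟨-p, ?_, -(p 0 0) - 1, -(p 0 1), -(p 1 0), ?_, by nlinarith [hdetp], ?_⟩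
      · intro n
        have key : p ^ n = (-1 : SL(2, ℝ)) ^ n * (-p) ^ n := by
          rw [← (Commute.neg_one_left (-p)).mul_zpow, neg_one_mul, neg_neg]
        rw [key, mul_smul, parabolic_neg_one_zpow_smul]
      · ext i j
        rw [Matrix.SpecialLinearGroup.coe_neg]
        fin_cases i <;> fin_cases j <;>
          simp [Matrix.cons_val_zero, Matrix.cons_val_one] <;> linarith [h2]
      · rintro ⟨ha, hb, hc⟩
        apply hpm1
        ext i j
        fin_cases i <;> fin_cases j <;>
          simp [Matrix.neg_apply, Matrix.one_apply, Matrix.cons_val_zero,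
            Matrix.cons_val_one] <;> linarith [h2]
  have hy : 0 < z.im := z.im_pos
  set A := ‖(c : ℂ) * (z : ℂ) ^ 2 - 2 * a * z - b‖ with hA
  have hApos : 0 < A := norm_pos_iff.mpr (parab_quad_ne a b c hrel habc z)
  set C := A / (2 * z.im) with hCdef
  have hC : 0 < C := by positivity
  refine ⟨2 * Real.log (2 * C), 2 * Real.log (3 * C), ?_, ⌈1 / C⌉₊, ?_⟩
  · have h23 : Real.log (2 * C) ≤ Real.log (3 * C) :=
      Real.log_le_log (by positivity) (by linarith)
    linarith
  · intro n hn
    have hnabs : (1 : ℝ) / C < |(n : ℝ)| := by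
      have h1 : (1 : ℝ) / C ≤ (⌈1 / C⌉₊ : ℝ) := Nat.le_ceil _
      have h2 : ((⌈1 / C⌉₊ : ℕ) : ℝ) < |(n : ℝ)| := by
        have : ((⌈1 / C⌉₊ : ℤ) : ℝ) < ((|n| : ℤ) : ℝ) := by exact_mod_cast hn
        push_cast at this
        exact this
      linarith
    have hnpos : (0 : ℝ) < |(n : ℝ)| := lt_trans (by positivity) hnabs
    set t := C * |(n : ℝ)| with ht
    have ht1 : 1 ≤ t := by
      rw [div_lt_iff₀ hC] at hnabs
      rw [ht]; linarith [hnabs]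
    have htpos : (0 : ℝ) < t := by linarith
    have hdist : dist z (p ^ n • z) = 2 * Real.arsinh t := by
      rw [hqsmul n, parab_core q a b c hrel hq z n]
      congr 1
      rw [ht, hCdef, hA]
      field_simp
    have harsinh : Real.arsinh t = Real.log (t + Real.sqrt (1 + t ^ 2)) := rfl
    have hsq1 : t ≤ Real.sqrt (1 + t ^ 2) := by
      nth_rewrite 1 [show t = Real.sqrt (t ^ 2) from (Real.sqrt_sq (by linarith)).symm]
      exact Real.sqrt_le_sqrt (by linarith)
    have hsq2 : Real.sqrt (1 + t ^ 2) ≤ 2 * t := by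
      rw [show 2 * t = Real.sqrt ((2 * t) ^ 2) from (Real.sqrt_sq (by linarith)).symm]
      exact Real.sqrt_le_sqrt (by nlinarith)
    have hlow : Real.log (2 * t) ≤ Real.arsinh t := by
      rw [harsinh]
      exact Real.log_le_log (by positivity) (by linarith)
    have hupp : Real.arsinh t ≤ Real.log (3 * t) := by
      rw [harsinh]
      exact Real.log_le_log (by linarith) (by linarith)
    have hlog2 : Real.log (2 * t) = Real.log |(n : ℝ)| + Real.log (2 * C) := by
      rw [ht, show 2 * (C * |(n : ℝ)|) = (2 * C) * |(n : ℝ)| by ring,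
        Real.log_mul (by positivity) (ne_of_gt hnpos), add_comm]
    have hlog3 : Real.log (3 * t) = Real.log |(n : ℝ)| + Real.log (3 * C) := by
      rw [ht, show 3 * (C * |(n : ℝ)|) = (3 * C) * |(n : ℝ)| by ring,
        Real.log_mul (by positivity) (ne_of_gt hnpos), add_comm]
    rw [hdist]
    constructor <;> [linarith [hlow, hlog2]; linarith [hupp, hlog3]]
end

section
/- Let X be a set, σ : X → X a map, τ : X → ℝ a function, K a positive natural number, and C > 0 such that for every x ∈ X, ∑_{n=0}^{K−1} τ(σⁿ x) ≥ C. Define τ'(x) := (1/K)·∑_{n=1}^{K} τ(σⁿ x) and h(x) := ∑_{n=0}^{K−1} (1 − n/K)·τ(σⁿ x). Then for every x ∈ X one has τ(x) = τ'(x) + h(x) − h(σ x), and τ'(x) ≥ C/K. In particular, τ is cohomologous to a function bounded away from zero. -/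
/-- A function with Birkhoff sums of length `K` bounded below by `C > 0` is cohomologous,
via the transfer function `h(x) = ∑_{n<K} (1 - n/K)·τ(σⁿ x)`, to the function
`τ'(x) = (1/K)·∑_{n=1}^{K} τ(σⁿ x)`, which is bounded below by `C/K`. -/
theorem cohomologous_to_bounded_below (X : Type*) (σ : X → X) (τ : X → ℝ)
    (K : ℕ) (hK : 0 < K) (C : ℝ) (hC : 0 < C)
    (hsum : ∀ x : X, C ≤ ∑ n ∈ Finset.range K, τ (σ^[n] x)) :
    ∀ x : X,
      (τ x = ((1 : ℝ) / K) * (∑ n ∈ Finset.Icc 1 K, τ (σ^[n] x))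
          + (∑ n ∈ Finset.range K, (1 - (n : ℝ) / K) * τ (σ^[n] x))
          - (∑ n ∈ Finset.range K, (1 - (n : ℝ) / K) * τ (σ^[n] (σ x))))
      ∧ C / K ≤ ((1 : ℝ) / K) * (∑ n ∈ Finset.Icc 1 K, τ (σ^[n] x)) := by
  intro x
  have hKR : ((K : ℝ)) ≠ 0 := Nat.cast_ne_zero.2 hK.ne'
  set f : ℕ → ℝ := fun n => τ (σ^[n] x) with hf
  have hiter : ∀ n, τ (σ^[n] (σ x)) = f (n + 1) := by
    intro n
    rw [← Function.iterate_succ_apply]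
  have hIcc : ∑ n ∈ Finset.Icc 1 K, τ (σ^[n] x) = ∑ n ∈ Finset.range K, f (n + 1) := by
    rw [← Finset.Ico_add_one_right_eq_Icc, Finset.sum_Ico_eq_sum_range]
    simp [add_comm, hf]
  constructor
  · have tel := Finset.sum_range_sub' (fun n => (1 - (n : ℝ) / K) * f n) K
    have combine :
        ((1 : ℝ) / K) * (∑ n ∈ Finset.range K, f (n + 1))
          + (∑ n ∈ Finset.range K, (1 - (n : ℝ) / K) * f n)
          - (∑ n ∈ Finset.range K, (1 - (n : ℝ) / K) * f (n + 1))
        = ∑ n ∈ Finset.range K,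
            ((1 - (n : ℝ) / K) * f n - (1 - ((n : ℝ) + 1) / K) * f (n + 1)) := by
      rw [Finset.mul_sum, ← Finset.sum_add_distrib, ← Finset.sum_sub_distrib]
      refine Finset.sum_congr rfl fun n _ => by ring
    have hgoal : τ x = f 0 := rfl
    rw [hIcc]
    simp only [hiter]
    rw [combine]
    have : ∑ n ∈ Finset.range K,
        ((1 - (n : ℝ) / K) * f n - (1 - ((n : ℝ) + 1) / K) * f (n + 1))
        = (1 - (0 : ℝ) / K) * f 0 - (1 - (K : ℝ) / K) * f K := by
      simpa using tel
    rw [this, div_self hKR]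
    simp [hgoal]
  · rw [hIcc, one_div, inv_mul_eq_div, div_le_div_iff_of_pos_right]
    · calc C ≤ ∑ n ∈ Finset.range K, τ (σ^[n] (σ x)) := hsum (σ x)
        _ = ∑ n ∈ Finset.range K, f (n + 1) := by simp [hiter]
    · exact_mod_cast hK
end

section
/- Let G be a group, ρ1, ρ2 : G → SL(2,ℝ) group homomorphisms, o1, o2 ∈ ℍ, and suppose there exists C ≥ 1 such that (1/C)·d1(γ) ≤ d2(γ) ≤ C·d1(γ) for all γ ∈ G. Fix a, b ≥ 0 with a + b > 0. Then the following are equivalent: (i) for every t > 0 the family γ ↦ exp(−(a·d1(γ) + b·d2(γ)) − t·d1(γ)) is summable over G and for every t < 0 it is not summable; (ii) for every s > 1 the family γ ↦ exp(−s·(a·d1(γ) + b·d2(γ))) is summable over G and for every s < 1 it is not summable. (The PPS critical exponent is 0 iff the weighted critical exponent is 1.) -/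
open scoped MatrixGroups UpperHalfPlane

/-- For bilipschitz-comparable displacement functions, the PPS critical exponent is `0`
if and only if the weighted critical exponent `δ^{a,b}` is `1`. -/
theorem pps_exponent_zero_iff_weighted_exponent_one (G : Type*) [Group G]
    (ρ1 ρ2 : G →* SL(2, ℝ)) (o1 o2 : ℍ) (C : ℝ) (hC : 1 ≤ C)
    (hcomp : ∀ γ : G, (1 / C) * dOrb ρ1 o1 γ ≤ dOrb ρ2 o2 γ ∧
      dOrb ρ2 o2 γ ≤ C * dOrb ρ1 o1 γ)
    (a b : ℝ) (ha : 0 ≤ a) (hb : 0 ≤ b) (hab : 0 < a + b) :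
    ((∀ t : ℝ, 0 < t → Summable fun γ : G =>
        Real.exp (-(a * dOrb ρ1 o1 γ + b * dOrb ρ2 o2 γ) - t * dOrb ρ1 o1 γ)) ∧
      (∀ t : ℝ, t < 0 → ¬ Summable fun γ : G =>
        Real.exp (-(a * dOrb ρ1 o1 γ + b * dOrb ρ2 o2 γ) - t * dOrb ρ1 o1 γ)))
    ↔
    ((∀ s : ℝ, 1 < s → Summable fun γ : G =>
        Real.exp (-s * (a * dOrb ρ1 o1 γ + b * dOrb ρ2 o2 γ))) ∧
      (∀ s : ℝ, s < 1 → ¬ Summable fun γ : G =>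
        Real.exp (-s * (a * dOrb ρ1 o1 γ + b * dOrb ρ2 o2 γ)))) := by
  set d1 : G → ℝ := dOrb ρ1 o1 with hd1def
  set d2 : G → ℝ := dOrb ρ2 o2 with hd2def
  have hC0 : (0:ℝ) < C := lt_of_lt_of_le one_pos hC
  have hd1nn : ∀ γ, 0 ≤ d1 γ := fun γ => dist_nonneg
  set K1 : ℝ := a + b / C with hK1def
  set K2 : ℝ := a + b * C with hK2def
  have hK1 : 0 < K1 := by
    have h1 : 0 < (a + b) / C := div_pos hab hC0
    have h2 : a / C ≤ a := div_le_self ha hC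
    have h3 : (a + b) / C = a / C + b / C := add_div a b C
    rw [hK1def]; linarith
  have hK2 : 0 < K2 := by
    have h1 : b ≤ b * C := le_mul_of_one_le_right hb hC
    rw [hK2def]; linarith
  have hF1 : ∀ γ, K1 * d1 γ ≤ a * d1 γ + b * d2 γ := by
    intro γ
    have h := mul_le_mul_of_nonneg_left (hcomp γ).1 hb
    have he : K1 * d1 γ = a * d1 γ + b * (1 / C * d1 γ) := by
      rw [hK1def]; field_simp
    rw [he]; linarith
  have hF2 : ∀ γ, a * d1 γ + b * d2 γ ≤ K2 * d1 γ := by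
    intro γ
    have h := mul_le_mul_of_nonneg_left (hcomp γ).2 hb
    have he : K2 * d1 γ = a * d1 γ + b * (C * d1 γ) := by rw [hK2def]; ring
    rw [he]; linarith
  constructor
  · rintro ⟨h1, h2⟩
    constructor
    · intro s hs
      have ht : 0 < (s - 1) * K1 := mul_pos (by linarith) hK1
      refine Summable.of_nonneg_of_le (fun γ => (Real.exp_pos _).le)
        (fun γ => Real.exp_le_exp.mpr ?_) (h1 ((s - 1) * K1) ht)
      nlinarith [hF1 γ, hd1nn γ]
    · intro s hs hsum
      have ht : (s - 1) * K1 < 0 := mul_neg_of_neg_of_pos (by linarith) hK1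
      refine h2 ((s - 1) * K1) ht (Summable.of_nonneg_of_le
        (fun γ => (Real.exp_pos _).le) (fun γ => Real.exp_le_exp.mpr ?_) hsum)
      nlinarith [hF1 γ, hd1nn γ]
  · rintro ⟨h1, h2⟩
    constructor
    · intro t ht
      have hs : 1 < 1 + t / K2 := by
        have := div_pos ht hK2; linarith
      refine Summable.of_nonneg_of_le (fun γ => (Real.exp_pos _).le)
        (fun γ => Real.exp_le_exp.mpr ?_) (h1 (1 + t / K2) hs)
      have hmul : t / K2 * (a * d1 γ + b * d2 γ) ≤ t / K2 * (K2 * d1 γ) :=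
        mul_le_mul_of_nonneg_left (hF2 γ) (by positivity)
      have heq : t / K2 * (K2 * d1 γ) = t * d1 γ := by
        field_simp
      nlinarith [hmul, heq]
    · intro t ht hsum
      have hs : 1 + t / K2 < 1 := by
        have := div_neg_of_neg_of_pos ht hK2; linarith
      refine h2 (1 + t / K2) hs (Summable.of_nonneg_of_le
        (fun γ => (Real.exp_pos _).le) (fun γ => Real.exp_le_exp.mpr ?_) hsum)
      have hmul : t / K2 * (K2 * d1 γ) ≤ t / K2 * (a * d1 γ + b * d2 γ) :=
        mul_le_mul_of_nonpos_left (hF2 γ) (by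
          exact le_of_lt (div_neg_of_neg_of_pos ht hK2))
      have heq : t / K2 * (K2 * d1 γ) = t * d1 γ := by
        field_simp
      nlinarith [hmul, heq]
end

section
/- Let G be a group, ρ1, ρ2 : G → SL(2,ℝ) group homomorphisms, and o1, o2 ∈ ℍ. Suppose h1, h2 > 0 are real numbers such that for every s > h1 the family γ ↦ exp(−s·d1(γ)) is summable over G, and for every s > h2 the family γ ↦ exp(−s·d2(γ)) is summable over G. Then for every s > h1·h2/(h1 + h2), the family γ ↦ exp(−s·(d1(γ) + d2(γ))) is summable over G. (Hence the critical exponent δ^{1,1} of the Manhattan metric satisfies the Bishop–Steger inequality δ^{1,1} ≤ h1·h2/(h1 + h2).) -/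
open scoped MatrixGroups UpperHalfPlane

/-- Bishop–Steger inequality: the critical exponent of the Manhattan metric satisfies
`δ^{1,1} ≤ h1·h2/(h1 + h2)`. -/
theorem bishop_steger_inequality (G : Type*) [Group G]
    (ρ1 ρ2 : G →* SL(2, ℝ)) (o1 o2 : ℍ) (h1 h2 : ℝ) (hh1 : 0 < h1) (hh2 : 0 < h2)
    (hsum1 : ∀ s : ℝ, h1 < s → Summable fun γ : G => Real.exp (-s * dOrb ρ1 o1 γ))
    (hsum2 : ∀ s : ℝ, h2 < s → Summable fun γ : G => Real.exp (-s * dOrb ρ2 o2 γ)) :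
    ∀ s : ℝ, h1 * h2 / (h1 + h2) < s →
      Summable fun γ : G => Real.exp (-s * (dOrb ρ1 o1 γ + dOrb ρ2 o2 γ)) := by
  intro s hs
  have hsum : 0 < h1 + h2 := by linarith
  have hs0 : 0 < s := lt_of_le_of_lt (by positivity) hs
  set s1 : ℝ := s * (h1 + h2) / h2 with hs1def
  set s2 : ℝ := s * (h1 + h2) / h1 with hs2def
  have hs1 : h1 < s1 := by
    rw [hs1def, lt_div_iff₀ hh2]
    have := (div_lt_iff₀ hsum).mp hs
    nlinarith
  have hs2 : h2 < s2 := by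
    rw [hs2def, lt_div_iff₀ hh1]
    have := (div_lt_iff₀ hsum).mp hs
    nlinarith
  have S1 := hsum1 s1 hs1
  have S2 := hsum2 s2 hs2
  refine Summable.of_nonneg_of_le (f := fun γ =>
      Real.exp (-s1 * dOrb ρ1 o1 γ) + Real.exp (-s2 * dOrb ρ2 o2 γ))
    (fun γ => (Real.exp_pos _).le) ?_ (S1.add S2)
  · intro γ
    set d1 := dOrb ρ1 o1 γ with hd1
    set d2 := dOrb ρ2 o2 γ with hd2
    have hd1n : 0 ≤ d1 := dist_nonneg
    have hd2n : 0 ≤ d2 := dist_nonneg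
    rcases le_total (h1 / h2 * d1) d2 with h | h
    · have key : s1 * d1 ≤ s * (d1 + d2) := by
        rw [hs1def, div_mul_eq_mul_div, div_le_iff₀ hh2]
        have : h1 * d1 ≤ h2 * d2 := by
          have := (div_mul_eq_mul_div h1 h2 d1) ▸ h
          nlinarith [(div_le_iff₀ hh2).mp this]
        nlinarith
      calc Real.exp (-s * (d1 + d2)) ≤ Real.exp (-s1 * d1) := by
            apply Real.exp_le_exp.mpr; nlinarith
        _ ≤ _ := le_add_of_nonneg_right (Real.exp_pos _).le
    · have key : s2 * d2 ≤ s * (d1 + d2) := by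
        rw [hs2def, div_mul_eq_mul_div, div_le_iff₀ hh1]
        have : h2 * d2 ≤ h1 * d1 := by
          have := (div_mul_eq_mul_div h1 h2 d1) ▸ h
          nlinarith [(le_div_iff₀ hh2).mp this]
        nlinarith
      calc Real.exp (-s * (d1 + d2)) ≤ Real.exp (-s2 * d2) := by
            apply Real.exp_le_exp.mpr; nlinarith
        _ ≤ _ := le_add_of_nonneg_left (Real.exp_pos _).le
end

section
/- Let p1, p2 ∈ SL(2,ℝ) be parabolic, z1, z2 ∈ ℍ, and a, b ≥ 0 with a + b > 0, and set Θ := 1/(2(a+b)). Then the [0,∞]-valued function Q(t) := ∑_{n∈ℤ} exp(−t·(a·dist(z1, p1ⁿ·z1) + b·dist(z2, p2ⁿ·z2))) tends to ∞ as t tends to Θ from the right (along (Θ, ∞)). (The weighted Poincaré series of a parabolic cyclic group blows up at its critical exponent.) -/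
open scoped MatrixGroups UpperHalfPlane ENNReal

open scoped NNReal
open Real Complex

abbrev M2 := Matrix (Fin 2) (Fin 2) ℝ

lemma pow_coe_nat (p : SL(2,ℝ)) (h : ((p : M2) - 1) * ((p : M2) - 1) = 0) (m : ℕ) :
    ((p ^ m : SL(2,ℝ)) : M2) = 1 + (m : ℝ) • ((p : M2) - 1) := by
  induction m with
  | zero => simp
  | succ k ih =>
    have hmul : ((p ^ (k+1) : SL(2,ℝ)) : M2) = ((p ^ k : SL(2,ℝ)) : M2) * (p : M2) := by
      rw [pow_succ]; simp
    rw [hmul, ih]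
    have hp : (p : M2) = 1 + ((p : M2) - 1) := by noncomm_ring
    set N := ((p : M2) - 1) with hN
    calc (1 + (k:ℝ) • N) * (p : M2) = (1 + (k:ℝ) • N) * (1 + N) := by rw [← hp]
    _ = 1 + N + (k:ℝ) • N + (k:ℝ) • (N * N) := by
        simp [mul_add, add_mul, Matrix.smul_mul, Matrix.mul_smul]; abel
    _ = 1 + ((k:ℝ)+1) • N := by rw [h]; simp [add_smul]; abel
    _ = 1 + (((k+1:ℕ)):ℝ) • N := by push_cast; rfl

lemma inv_coe (p : SL(2,ℝ)) (h : ((p : M2) - 1) * ((p : M2) - 1) = 0) :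
    ((p⁻¹ : SL(2,ℝ)) : M2) = 1 - ((p : M2) - 1) := by
  set N := ((p : M2) - 1) with hN
  have h1 : (1 - N) * (1 + N) = 1 := by
    have e : (1 - N) * (1 + N) = 1 - N * N := by noncomm_ring
    rw [e, h, sub_zero]
  have h2 : (1 + N) * ((p⁻¹ : SL(2,ℝ)) : M2) = 1 := by
    have e : (1 + N) = (p : M2) := by rw [hN]; abel
    rw [e, ← Matrix.SpecialLinearGroup.coe_mul, mul_inv_cancel]
    simp
  calc ((p⁻¹ : SL(2,ℝ)) : M2) = ((1 - N) * (1 + N)) * ((p⁻¹ : SL(2,ℝ)) : M2) := by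
        rw [h1, one_mul]
  _ = (1 - N) * ((1 + N) * ((p⁻¹ : SL(2,ℝ)) : M2)) := by rw [mul_assoc]
  _ = 1 - N := by rw [h2, mul_one]

lemma pow_coe_int (p : SL(2,ℝ)) (h : ((p : M2) - 1) * ((p : M2) - 1) = 0) (n : ℤ) :
    ((p ^ n : SL(2,ℝ)) : M2) = 1 + (n : ℝ) • ((p : M2) - 1) := by
  rcases Int.natAbs_eq n with hn | hn
  · rw [hn, zpow_natCast, pow_coe_nat p h, Int.cast_natCast]
  · rw [hn, zpow_neg, zpow_natCast]
    set m := n.natAbs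
    have hq : ((p ^ m : SL(2,ℝ)) : M2) = 1 + (m : ℝ) • ((p : M2) - 1) := pow_coe_nat p h m
    have hq2 : (((p ^ m : SL(2,ℝ)) : M2) - 1) * (((p ^ m : SL(2,ℝ)) : M2) - 1) = 0 := by
      rw [hq]
      simp only [add_sub_cancel_left, Matrix.smul_mul, Matrix.mul_smul, h, smul_zero]
    rw [inv_coe _ hq2, hq]
    push_cast
    simp only [add_sub_cancel_left, neg_smul]
    abel

lemma nilpotent_of_trace_two (p : SL(2,ℝ)) (htr : (p : M2) 0 0 + (p : M2) 1 1 = 2) :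
    ((p : M2) - 1) * ((p : M2) - 1) = 0 := by
  have hdet : (p : M2) 0 0 * (p : M2) 1 1 - (p : M2) 0 1 * (p : M2) 1 0 = 1 := by
    have := p.prop
    rwa [Matrix.det_fin_two] at this
  ext i j
  fin_cases i <;> fin_cases j <;>
    simp [Matrix.mul_apply, Fin.sum_univ_two, Matrix.sub_apply, Matrix.one_apply] <;>
    first
      | linear_combination (p : M2) 0 0 * htr - hdet
      | linear_combination (p : M2) 0 1 * htr
      | linear_combination (p : M2) 1 0 * htr
      | linear_combination (p : M2) 1 1 * htr - hdet

lemma poly_ne_zero (p : SL(2,ℝ)) (htr : (p : M2) 0 0 + (p : M2) 1 1 = 2) (hne : (p : M2) ≠ 1) (z : ℍ) :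
    ((p : M2) 1 0 : ℂ) * (z:ℂ)^2 + (((p : M2) 1 1 : ℝ) - (p : M2) 0 0) * (z:ℂ) - ((p : M2) 0 1 : ℂ) ≠ 0 := by
  set a := (p : M2) 0 0; set b := (p : M2) 0 1; set c := (p : M2) 1 0; set d := (p : M2) 1 1
  have hdet : a * d - b * c = 1 := by
    have := p.prop; rwa [Matrix.det_fin_two] at this
  intro hw
  have hy : 0 < z.im := z.im_pos
  have him : c * (z.re * z.im + z.im * z.re) + (d - a) * z.im = 0 := by
    have := congrArg Complex.im hw
    simpa [Complex.add_im, Complex.sub_im, Complex.mul_im, Complex.ofReal_re, Complex.ofReal_im,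
      pow_two, Complex.mul_re] using this
  have hre : c * (z.re * z.re - z.im * z.im) + (d - a) * z.re - b = 0 := by
    have := congrArg Complex.re hw
    simpa [Complex.add_re, Complex.sub_re, Complex.mul_re, Complex.ofReal_re, Complex.ofReal_im,
      pow_two, Complex.mul_im] using this
  have h1 : 2*c*z.re + d - a = 0 := by nlinarith [him, hy]
  have hcx : c * z.re = a - 1 := by linarith
  have hbc : b * c = -(a-1)^2 := by linear_combination a*htr - hdet
  have hkey : c^2 * z.im^2 = 0 := by
    linear_combination (-c) * hre + (c*z.re) * h1 + (-1) * hbc + (-(c*z.re + a - 1)) * hcx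
  have hc : c = 0 := by
    have h2 : c^2 = 0 := by
      rcases mul_eq_zero.mp hkey with h | h
      · exact h
      · exact absurd h (by positivity)
    exact pow_eq_zero_iff two_ne_zero |>.mp h2
  have ha : a = 1 := by rw [hc] at hcx; linarith
  have hd : d = 1 := by linarith
  have hb : b = 0 := by rw [hc, ha, hd] at hre; linarith
  apply hne
  ext i j
  fin_cases i <;> fin_cases j <;> simp [Matrix.one_apply] <;>
    first | exact ha | exact hb | exact hc | exact hd

lemma det_entries (g : SL(2,ℝ)) :
    (g : M2) 0 0 * (g : M2) 1 1 - (g : M2) 0 1 * (g : M2) 1 0 = 1 := by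
  have := g.prop; rwa [Matrix.det_fin_two] at this

lemma denom_ne' (g : SL(2,ℝ)) (z : ℍ) :
    ((g : M2) 1 0 : ℂ) * (z:ℂ) + ((g : M2) 1 1 : ℂ) ≠ 0 := by
  have hdetg := det_entries g
  set c := (g : M2) 1 0; set d := (g : M2) 1 1
  intro h
  have him : c * z.im = 0 := by
    have := congrArg Complex.im h
    simpa using this
  have hc : c = 0 := by
    rcases mul_eq_zero.mp him with h' | h'
    · exact h'
    · exact absurd h' z.im_pos.ne'
  have hd : d = 0 := by
    have := congrArg Complex.re h
    simp [hc] at this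
    exact_mod_cast this
  rw [hc, hd] at hdetg; simp at hdetg

lemma coe_smul'' (g : SL(2,ℝ)) (z : ℍ) :
    ((g • z : ℍ) : ℂ) =
      (((g : M2) 0 0 : ℂ) * z + ((g : M2) 0 1 : ℂ)) /
        (((g : M2) 1 0 : ℂ) * z + ((g : M2) 1 1 : ℂ)) := by
  rw [UpperHalfPlane.specialLinearGroup_apply]
  simp

lemma im_smul'' (g : SL(2,ℝ)) (z : ℍ) :
    (g • z).im = z.im / Complex.normSq (((g : M2) 1 0 : ℂ) * z + ((g : M2) 1 1 : ℂ)) := by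
  have hdetg := det_entries g
  rw [UpperHalfPlane.im, coe_smul'', Complex.div_im]
  set a := (g : M2) 0 0; set b := (g : M2) 0 1; set c := (g : M2) 1 0; set d := (g : M2) 1 1
  rw [div_sub_div_same]
  congr 1
  simp only [Complex.add_re, Complex.add_im, Complex.mul_re, Complex.mul_im, Complex.ofReal_re,
    Complex.ofReal_im, UpperHalfPlane.coe_im]
  linear_combination (z.im) * hdetg

lemma sub_smul'' (g : SL(2,ℝ)) (z : ℍ) :
    (z:ℂ) - ((g • z : ℍ) : ℂ) =
      (((g : M2) 1 0 : ℂ) * (z:ℂ)^2 + (((g : M2) 1 1 : ℂ) - ((g : M2) 0 0 : ℂ)) * z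
        - ((g : M2) 0 1 : ℂ)) /
        (((g : M2) 1 0 : ℂ) * z + ((g : M2) 1 1 : ℂ)) := by
  rw [coe_smul'', eq_div_iff (denom_ne' g z), sub_mul, div_mul_cancel₀ _ (denom_ne' g z)]
  ring

lemma dist_smul_eq' (g : SL(2,ℝ)) (z : ℍ) :
    dist z (g • z) = 2 * arsinh (norm
      (((g : M2) 1 0 : ℂ) * (z:ℂ)^2 + (((g : M2) 1 1 : ℂ) - ((g : M2) 0 0 : ℂ)) * z
        - ((g : M2) 0 1 : ℂ)) / (2 * z.im)) := by
  rw [UpperHalfPlane.dist_eq]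
  congr 1
  set D := (((g : M2) 1 0 : ℂ) * z + ((g : M2) 1 1 : ℂ)) with hDdef
  have hD := denom_ne' g z
  have hnsq : 0 < Complex.normSq D := Complex.normSq_pos.mpr hD
  set s := Real.sqrt (Complex.normSq D) with hs
  have hspos : 0 < s := Real.sqrt_pos.mpr hnsq
  have hs2 : s^2 = Complex.normSq D := Real.sq_sqrt hnsq.le
  have habsD : ‖D‖ = s := rfl
  rw [Complex.dist_eq, sub_smul'', norm_div, habsD, im_smul'']
  have h1 : z.im * (z.im / Complex.normSq D) = (z.im / s)^2 := by
    rw [div_pow, hs2]; ring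
  rw [← hDdef, h1, Real.sqrt_sq (by positivity)]
  have h2 : s * (2 * (z.im / s)) = 2 * z.im := by field_simp
  rw [div_div, h2]

lemma arsinh_le_log (u : ℝ) (hu : 0 ≤ u) : arsinh u ≤ Real.log (1 + 2*u) := by
  have h1 : (0:ℝ) < 1 + 2*u := by linarith
  rw [← Real.arsinh_sinh (Real.log (1 + 2*u)), Real.arsinh_le_arsinh, Real.sinh_log h1]
  have hv : (1 + 2*u) * (1 + 2*u)⁻¹ = 1 := mul_inv_cancel₀ h1.ne'
  nlinarith [hv, hu]

lemma dist_bound_tr2 (p : SL(2,ℝ)) (htr : (p : M2) 0 0 + (p : M2) 1 1 = 2)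
    (hne : (p : M2) ≠ 1) (z : ℍ) :
    ∃ C : ℝ, 0 < C ∧ ∀ n : ℤ, dist z (p ^ n • z) ≤ 2 * Real.log (1 + |(n:ℝ)| * C) := by
  have hNN := nilpotent_of_trace_two p htr
  set w : ℂ := ((p : M2) 1 0 : ℂ) * (z:ℂ)^2 + (((p : M2) 1 1 : ℝ) - (p : M2) 0 0) * (z:ℂ)
      - ((p : M2) 0 1 : ℂ) with hw
  have hwne : w ≠ 0 := poly_ne_zero p htr hne z
  have hK : 0 < ‖w‖ := by simpa using hwne
  refine ⟨‖w‖ / z.im, by positivity, fun n => ?_⟩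
  rw [dist_smul_eq']
  have hG := pow_coe_int p hNN n
  have e00 : ((p^n : SL(2,ℝ)) : M2) 0 0 = 1 + (n:ℝ) * ((p : M2) 0 0 - 1) := by
    rw [hG]; simp [Matrix.one_apply]
  have e01 : ((p^n : SL(2,ℝ)) : M2) 0 1 = (n:ℝ) * (p : M2) 0 1 := by
    rw [hG]; simp [Matrix.one_apply]
  have e10 : ((p^n : SL(2,ℝ)) : M2) 1 0 = (n:ℝ) * (p : M2) 1 0 := by
    rw [hG]; simp [Matrix.one_apply]
  have e11 : ((p^n : SL(2,ℝ)) : M2) 1 1 = 1 + (n:ℝ) * ((p : M2) 1 1 - 1) := by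
    rw [hG]; simp [Matrix.one_apply]
  have hpoly : (((p^n : SL(2,ℝ)) : M2) 1 0 : ℂ) * (z:ℂ)^2
      + ((((p^n : SL(2,ℝ)) : M2) 1 1 : ℂ) - (((p^n : SL(2,ℝ)) : M2) 0 0 : ℂ)) * z
      - (((p^n : SL(2,ℝ)) : M2) 0 1 : ℂ) = (n:ℝ) * w := by
    rw [e00, e01, e10, e11, hw]
    push_cast
    ring
  rw [hpoly]
  have habs : ‖((n:ℝ):ℂ) * w‖ = |(n:ℝ)| * ‖w‖ := by
    rw [norm_mul, Complex.norm_real, Real.norm_eq_abs]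
  rw [habs]
  have hy := z.im_pos
  have key : |(n:ℝ)| * ‖w‖ / (2 * z.im) ≥ 0 := by positivity
  calc 2 * arsinh (|(n:ℝ)| * ‖w‖ / (2 * z.im))
      ≤ 2 * Real.log (1 + 2 * (|(n:ℝ)| * ‖w‖ / (2 * z.im))) := by
        have := arsinh_le_log _ key
        linarith
  _ = 2 * Real.log (1 + |(n:ℝ)| * (‖w‖ / z.im)) := by
        rw [show 2 * (|(n:ℝ)| * ‖w‖ / (2 * z.im)) = |(n:ℝ)| * (‖w‖ / z.im) by
          field_simp]

lemma neg_smul_eq (g : SL(2,ℝ)) (z : ℍ) : (-g) • z = g • z := by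
  apply UpperHalfPlane.ext
  rw [UpperHalfPlane.specialLinearGroup_apply (-g) z, UpperHalfPlane.specialLinearGroup_apply g z]
  simp only [Matrix.SpecialLinearGroup.coe_neg, Matrix.neg_apply, Algebra.algebraMap_self_apply,
    Complex.ofReal_neg, UpperHalfPlane.coe_mk]
  rw [show -(↑(g 0 0):ℂ) * z + -(↑(g 0 1):ℂ) = -((g 0 0) * z + (g 0 1)) by ring,
      show -(↑(g 1 0):ℂ) * z + -(↑(g 1 1):ℂ) = -((g 1 0) * z + (g 1 1)) by ring,
      neg_div_neg_eq]

lemma neg_zpow_smul (g : SL(2,ℝ)) (n : ℤ) (z : ℍ) : (-g) ^ n • z = g ^ n • z := by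
  rcases Int.even_or_odd n with he | ho
  · rw [he.neg_zpow]
  · obtain ⟨k, rfl⟩ := ho
    have h2 : (2*k+1 : ℤ) = 2*k + 1 := rfl
    rw [zpow_add_one, zpow_add_one]
    rw [(even_two_mul k).neg_zpow]
    rw [mul_smul, mul_smul, neg_smul_eq]

lemma parabolic_dist_bound (p : SL(2,ℝ)) (hp : IsParabolic p) (z : ℍ) :
    ∃ C : ℝ, 0 < C ∧ ∀ n : ℤ, dist z (p ^ n • z) ≤ 2 * Real.log (1 + |(n:ℝ)| * C) := by
  obtain ⟨htr, hne1, hne2⟩ := hp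
  rw [Matrix.trace_fin_two] at htr
  have : (p : M2) 0 0 + (p : M2) 1 1 = 2 ∨ (p : M2) 0 0 + (p : M2) 1 1 = -2 := by
    rcases sq_eq_sq_iff_eq_or_eq_neg.mp (htr.trans (by norm_num : (4:ℝ) = 2^2)) with h | h
    · exact Or.inl h
    · exact Or.inr h
  rcases this with h | h
  · exact dist_bound_tr2 p h hne1 z
  · have hq : ((-p : SL(2,ℝ)) : M2) 0 0 + ((-p : SL(2,ℝ)) : M2) 1 1 = 2 := by
      rw [Matrix.SpecialLinearGroup.coe_neg]
      simp only [Matrix.neg_apply]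
      linarith
    have hqne : ((-p : SL(2,ℝ)) : M2) ≠ 1 := by
      rw [Matrix.SpecialLinearGroup.coe_neg]
      intro hcon
      exact hne2 (neg_eq_iff_eq_neg.mp hcon)
    obtain ⟨C, hC, hB⟩ := dist_bound_tr2 (-p) hq hqne z
    refine ⟨C, hC, fun n => ?_⟩
    have := hB n
    rwa [neg_zpow_smul p n z] at this

-- harmonic-type divergence
lemma harmonic_ofReal_tsum_top (c : ℝ) (hc : 0 < c) :
    ∑' n : ℤ, ENNReal.ofReal ((1 + |(n:ℝ)| * c)⁻¹) = ⊤ := by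
  have hnat : ∑' m : ℕ, ENNReal.ofReal ((1 + |((m:ℤ):ℝ)| * c)⁻¹) = ⊤ := by
    have hform : ∀ m : ℕ, (1 + |((m:ℤ):ℝ)| * c)⁻¹ = (1 + (m:ℝ) * c)⁻¹ := by
      intro m; congr 1; rw [Int.cast_natCast, _root_.abs_of_nonneg (by positivity)]
    have hnotsum : ¬ Summable (fun m : ℕ => (1 + (m:ℝ) * c)⁻¹) := by
      intro hsum
      have hcomp : Summable (fun m : ℕ => (1+c)⁻¹ * ((m:ℝ)+1)⁻¹) := by
        apply Summable.of_nonneg_of_le (fun m => by positivity) _ hsum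
        intro m
        rw [← mul_inv]
        apply inv_anti₀ (by positivity)
        nlinarith [Nat.cast_nonneg (α := ℝ) m, hc.le]
      have : Summable (fun m : ℕ => ((m:ℝ)+1)⁻¹) := by
        have h2 := hcomp.mul_left (1+c)
        refine h2.congr fun m => ?_
        field_simp
      have : Summable (fun m : ℕ => ((m:ℝ))⁻¹) := by
        rw [← summable_nat_add_iff 1] 
        exact this.congr fun m => by push_cast; ring_nf
      exact Real.not_summable_natCast_inv this
    simp_rw [hform]
    rw [show (fun m : ℕ => ENNReal.ofReal ((1 + (m:ℝ) * c)⁻¹)) =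
        (fun m : ℕ => ((Real.toNNReal ((1 + (m:ℝ) * c)⁻¹) : ℝ≥0) : ℝ≥0∞)) from rfl]
    rw [ENNReal.tsum_coe_eq_top_iff_not_summable_coe]
    intro hsum
    apply hnotsum
    refine hsum.congr fun m => ?_
    rw [Real.coe_toNNReal _ (by positivity)]
  refine top_le_iff.mp ?_
  rw [← hnat]
  exact ENNReal.tsum_comp_le_tsum_of_injective (fun x y h => by exact_mod_cast h) _

/-- The weighted Poincaré series of a parabolic cyclic group blows up at its critical
exponent `Θ = 1/(2(a+b))` as `t → Θ⁺`. -/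
theorem parabolic_series_blows_up_at_critical_exponent (p1 p2 : SL(2, ℝ))
    (hp1 : IsParabolic p1) (hp2 : IsParabolic p2) (z1 z2 : ℍ)
    (a b : ℝ) (ha : 0 ≤ a) (hb : 0 ≤ b) (hab : 0 < a + b) :
    Filter.Tendsto (fun t : ℝ => ∑' n : ℤ, ENNReal.ofReal (Real.exp
        (-t * (a * dist z1 (p1 ^ n • z1) + b * dist z2 (p2 ^ n • z2)))))
      (nhdsWithin (1 / (2 * (a + b))) (Set.Ioi (1 / (2 * (a + b)))))
      (nhds ⊤) := by
  set Θ : ℝ := 1 / (2 * (a + b)) with hΘdef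
  have hΘpos : 0 < Θ := by positivity
  obtain ⟨c1, hc1, hB1⟩ := parabolic_dist_bound p1 hp1 z1
  obtain ⟨c2, hc2, hB2⟩ := parabolic_dist_bound p2 hp2 z2
  set c := max c1 c2 with hcdef
  have hc : 0 < c := lt_max_of_lt_left hc1
  set w : ℤ → ℝ := fun n => a * dist z1 (p1 ^ n • z1) + b * dist z2 (p2 ^ n • z2) with hwdef
  have hw0 : ∀ n, 0 ≤ w n := fun n => by
    have := dist_nonneg (x := z1) (y := p1 ^ n • z1)
    have := dist_nonneg (x := z2) (y := p2 ^ n • z2)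
    positivity
  have hlog : ∀ n : ℤ, w n ≤ 2 * (a+b) * Real.log (1 + |(n:ℝ)| * c) := by
    intro n
    have h1 : dist z1 (p1 ^ n • z1) ≤ 2 * Real.log (1 + |(n:ℝ)| * c) := by
      refine (hB1 n).trans ?_
      have : (1:ℝ) + |(n:ℝ)| * c1 ≤ 1 + |(n:ℝ)| * c := by
        have := abs_nonneg (n:ℝ); nlinarith [le_max_left c1 c2]
      have hlog' := Real.log_le_log (by positivity) this
      linarith
    have h2 : dist z2 (p2 ^ n • z2) ≤ 2 * Real.log (1 + |(n:ℝ)| * c) := by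
      refine (hB2 n).trans ?_
      have : (1:ℝ) + |(n:ℝ)| * c2 ≤ 1 + |(n:ℝ)| * c := by
        have := abs_nonneg (n:ℝ); nlinarith [le_max_right c1 c2]
      have hlog' := Real.log_le_log (by positivity) this
      linarith
    have := mul_le_mul_of_nonneg_left h1 ha
    have := mul_le_mul_of_nonneg_left h2 hb
    rw [hwdef]; dsimp only; nlinarith
  have hΘw : ∀ n : ℤ, (1 + |(n:ℝ)| * c)⁻¹ ≤ Real.exp (-Θ * w n) := by
    intro n
    have hv : (0:ℝ) < 1 + |(n:ℝ)| * c := by positivity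
    have hexp : Real.exp (-Real.log (1 + |(n:ℝ)| * c)) = (1 + |(n:ℝ)| * c)⁻¹ := by
      rw [Real.exp_neg, Real.exp_log hv]
    rw [← hexp]
    apply Real.exp_le_exp.mpr
    have hThetaMul : Θ * (2 * (a+b)) = 1 := by
      rw [hΘdef]; field_simp
    have := mul_le_mul_of_nonneg_left (hlog n) hΘpos.le
    nlinarith [this, hThetaMul, Real.log_nonneg (by nlinarith [abs_nonneg (n:ℝ)] : (1:ℝ) ≤ 1 + |(n:ℝ)| * c)]
  -- divergence at Θ
  have hdiv : (∑' n : ℤ, ENNReal.ofReal (Real.exp (-Θ * w n))) = ⊤ := by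
    refine top_le_iff.mp ?_
    rw [← harmonic_ofReal_tsum_top c hc]
    exact ENNReal.tsum_le_tsum fun n => ENNReal.ofReal_le_ofReal (hΘw n)
  -- conclude
  rw [ENNReal.tendsto_nhds_top_iff_nat]
  intro M
  rw [ENNReal.tsum_eq_iSup_sum] at hdiv
  have hM : (M : ℝ≥0∞) < ⨆ s : Finset ℤ, ∑ n ∈ s, ENNReal.ofReal (Real.exp (-Θ * w n)) := by
    rw [hdiv]; exact ENNReal.natCast_lt_top M
  obtain ⟨F, hF⟩ := lt_iSup_iff.mp hM
  have hcont : Continuous (fun t : ℝ => ∑ n ∈ F, ENNReal.ofReal (Real.exp (-t * w n))) := by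
    apply continuous_finset_sum
    intro i _
    exact ENNReal.continuous_ofReal.comp (Real.continuous_exp.comp (by continuity))
  have htend : Filter.Tendsto (fun t : ℝ => ∑ n ∈ F, ENNReal.ofReal (Real.exp (-t * w n)))
      (nhdsWithin Θ (Set.Ioi Θ)) (nhds (∑ n ∈ F, ENNReal.ofReal (Real.exp (-Θ * w n)))) :=
    (hcont.tendsto Θ).mono_left nhdsWithin_le_nhds
  have hev := htend.eventually_const_lt hF
  refine hev.mono fun t ht => lt_of_lt_of_le ht ?_
  exact ENNReal.sum_le_tsum F
end

section
/- Let G be an infinite group, ρ1, ρ2 : G → SL(2,ℝ) group homomorphisms, and o1, o2 ∈ ℍ. Assume: for every r ∈ ℝ the set {γ ∈ G : d1(γ) ≤ r} is finite; there exists C ≥ 1 with (1/C)·d1(γ) ≤ d2(γ) ≤ C·d1(γ) for all γ; and there exists s0 ∈ ℝ with γ ↦ exp(−s0·d1(γ)) summable over G. Then the function φ : ℝ → ℝ defined by φ(a) := inf{b ∈ ℝ : γ ↦ exp(−(a·d1(γ) + b·d2(γ))) is summable over G} is real-valued and convex on [0, ∞). (The Manhattan curve is the graph of a convex, hence continuous,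 function.) -/
open scoped MatrixGroups UpperHalfPlane

/-- The Manhattan curve is the graph of a real-valued convex (hence continuous) function
`a ↦ φ(a) = inf{b : the (a,b)-weighted Poincaré series converges}` on `[0,∞)`. -/
theorem manhattan_curve_graph_of_convex_function (G : Type*) [Group G] [Infinite G]
    (ρ1 ρ2 : G →* SL(2, ℝ)) (o1 o2 : ℍ)
    (hfin : ∀ r : ℝ, {γ : G | dOrb ρ1 o1 γ ≤ r}.Finite)
    (C : ℝ) (hC : 1 ≤ C)
    (hcomp : ∀ γ : G, (1 / C) * dOrb ρ1 o1 γ ≤ dOrb ρ2 o2 γ ∧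
      dOrb ρ2 o2 γ ≤ C * dOrb ρ1 o1 γ)
    (s0 : ℝ) (hs0 : Summable fun γ : G => Real.exp (-s0 * dOrb ρ1 o1 γ)) :
    (∀ a : ℝ, 0 ≤ a →
      ({b : ℝ | Summable fun γ : G =>
          Real.exp (-(a * dOrb ρ1 o1 γ + b * dOrb ρ2 o2 γ))}.Nonempty ∧
        BddBelow {b : ℝ | Summable fun γ : G =>
          Real.exp (-(a * dOrb ρ1 o1 γ + b * dOrb ρ2 o2 γ))})) ∧
    ConvexOn ℝ (Set.Ici 0) (fun a : ℝ =>
      sInf {b : ℝ | Summable fun γ : G =>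
        Real.exp (-(a * dOrb ρ1 o1 γ + b * dOrb ρ2 o2 γ))}) := by
  clear hfin
  set d1 : G → ℝ := dOrb ρ1 o1 with hd1def
  set d2 : G → ℝ := dOrb ρ2 o2 with hd2def
  have hd1 : ∀ γ, 0 ≤ d1 γ := fun γ => dist_nonneg
  have hd2 : ∀ γ, 0 ≤ d2 γ := fun γ => dist_nonneg
  have hCpos : (0 : ℝ) < C := lt_of_lt_of_le one_pos hC
  have hd1le : ∀ γ, d1 γ ≤ C * d2 γ := by
    intro γ
    have h := mul_le_mul_of_nonneg_left (hcomp γ).1 hCpos.le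
    calc d1 γ = C * (1 / C * d1 γ) := by field_simp
      _ ≤ C * d2 γ := h
  -- nonemptiness witness
  have hmem : ∀ a : ℝ, 0 ≤ a → Summable fun γ : G =>
      Real.exp (-(a * d1 γ + (C * max s0 0) * d2 γ)) := by
    intro a ha
    refine hs0.of_nonneg_of_le (fun γ => (Real.exp_pos _).le) (fun γ => ?_)
    apply Real.exp_le_exp.2
    have hK : 0 ≤ C * max s0 0 := mul_nonneg hCpos.le (le_max_right _ _)
    have h1 : max s0 0 * d1 γ ≤ (C * max s0 0) * d2 γ := by
      have h := mul_le_mul_of_nonneg_left (hcomp γ).1 hK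
      calc max s0 0 * d1 γ = (C * max s0 0) * (1 / C * d1 γ) := by field_simp
        _ ≤ (C * max s0 0) * d2 γ := h
    have h2 : s0 * d1 γ ≤ max s0 0 * d1 γ :=
      mul_le_mul_of_nonneg_right (le_max_left _ _) (hd1 γ)
    have h3 : 0 ≤ a * d1 γ := mul_nonneg ha (hd1 γ)
    linarith
  -- infinite sums of terms ≥ 1 diverge
  have hnotsum : ∀ f : G → ℝ, (∀ γ, (1 : ℝ) ≤ f γ) → ¬ Summable f := by
    intro f hf hs
    have h := ge_of_tendsto' hs.tendsto_cofinite_zero hf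
    linarith
  -- lower bound
  have hbdd : ∀ a : ℝ, 0 ≤ a → ∀ b : ℝ,
      (Summable fun γ : G => Real.exp (-(a * d1 γ + b * d2 γ))) → -(a * C) ≤ b := by
    intro a ha b hb
    by_contra hcon
    push_neg at hcon
    refine hnotsum _ (fun γ => ?_) hb
    have h4 : a * d1 γ ≤ a * (C * d2 γ) := mul_le_mul_of_nonneg_left (hd1le γ) ha
    have h5 : (a * C + b) * d2 γ ≤ 0 :=
      mul_nonpos_of_nonpos_of_nonneg (by linarith) (hd2 γ)
    have h6 : a * d1 γ + b * d2 γ ≤ 0 := by nlinarith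
    calc (1 : ℝ) = Real.exp 0 := Real.exp_zero.symm
      _ ≤ Real.exp (-(a * d1 γ + b * d2 γ)) := Real.exp_le_exp.2 (by linarith)
  refine ⟨fun a ha => ⟨⟨C * max s0 0, hmem a ha⟩, ⟨-(a * C), fun b hb => hbdd a ha b hb⟩⟩, ?_⟩
  refine ⟨convex_Ici 0, ?_⟩
  intro a1 ha1 a2 ha2 t s ht hs hts
  simp only [smul_eq_mul]
  have ha1' : 0 ≤ a1 := ha1
  have ha2' : 0 ≤ a2 := ha2
  have hmid : 0 ≤ t * a1 + s * a2 := by positivity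
  set S : ℝ → Set ℝ := fun a => {b : ℝ | Summable fun γ : G =>
      Real.exp (-(a * d1 γ + b * d2 γ))} with hSdef
  have hSne : ∀ a, 0 ≤ a → (S a).Nonempty := fun a ha => ⟨C * max s0 0, hmem a ha⟩
  have hSbdd : ∀ a, 0 ≤ a → BddBelow (S a) :=
    fun a ha => ⟨-(a * C), fun b hb => hbdd a ha b hb⟩
  -- mixing lemma
  have hmix : ∀ b1 ∈ S a1, ∀ b2 ∈ S a2, t * b1 + s * b2 ∈ S (t * a1 + s * a2) := by
    intro b1 hb1 b2 hb2
    have hsum : Summable fun γ : G =>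
        t * Real.exp (-(a1 * d1 γ + b1 * d2 γ)) + s * Real.exp (-(a2 * d1 γ + b2 * d2 γ)) :=
      (hb1.mul_left t).add (hb2.mul_left s)
    refine hsum.of_nonneg_of_le (fun γ => (Real.exp_pos _).le) (fun γ => ?_)
    have hcvx := convexOn_exp.2 (Set.mem_univ (-(a1 * d1 γ + b1 * d2 γ)))
      (Set.mem_univ (-(a2 * d1 γ + b2 * d2 γ))) ht hs hts
    simp only [smul_eq_mul] at hcvx
    calc Real.exp (-((t * a1 + s * a2) * d1 γ + (t * b1 + s * b2) * d2 γ))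
        = Real.exp (t * -(a1 * d1 γ + b1 * d2 γ) + s * -(a2 * d1 γ + b2 * d2 γ)) := by ring_nf
      _ ≤ _ := hcvx
  refine le_of_forall_pos_le_add (fun ε hε => ?_)
  obtain ⟨b1, hb1, hb1'⟩ := Real.lt_sInf_add_pos (hSne a1 ha1') hε
  obtain ⟨b2, hb2, hb2'⟩ := Real.lt_sInf_add_pos (hSne a2 ha2') hε
  have h1 : sInf (S (t * a1 + s * a2)) ≤ t * b1 + s * b2 :=
    csInf_le (hSbdd _ hmid) (hmix b1 hb1 b2 hb2)
  have h2 : t * b1 ≤ t * (sInf (S a1) + ε) := mul_le_mul_of_nonneg_left hb1'.le ht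
  have h3 : s * b2 ≤ s * (sInf (S a2) + ε) := mul_le_mul_of_nonneg_left hb2'.le hs
  calc sInf (S (t * a1 + s * a2)) ≤ t * b1 + s * b2 := h1
    _ ≤ t * (sInf (S a1) + ε) + s * (sInf (S a2) + ε) := by linarith
    _ = t * sInf (S a1) + s * sInf (S a2) + ε := by nlinarith [hts]
end

section
/- Let G be a group, ρ1, ρ2 : G → SL(2,ℝ) group homomorphisms, o1, o2 ∈ ℍ, and suppose p ∈ G is such that ρ1(p) and ρ2(p) are both parabolic. Let a, b ≥ 0 with a + b > 0, and let t ∈ ℝ. If the family γ ↦ exp(−t·(a·d1(γ) + b·d2(γ))) is summable over G, then t > 1/(2(a+b)). (Hence the weighted critical exponent δ^{a,b} of a group containing a parabolic element is at least 1/(2(a+b)).) -/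
open scoped MatrixGroups UpperHalfPlane

lemma parabolic_pow (g : SL(2, ℝ)) (hg : IsParabolic g) :
    ∃ (ε : ℝ) (M : Matrix (Fin 2) (Fin 2) ℝ), (ε = 1 ∨ ε = -1) ∧ M ≠ 0 ∧
      M 1 1 = -(M 0 0) ∧
      ∀ n : ℕ, ((g ^ n : SL(2, ℝ)) : Matrix (Fin 2) (Fin 2) ℝ)
        = ε ^ n • (1 + (n : ℝ) • M) := by
  obtain ⟨htr, hne1, hnem1⟩ := hg
  set A : Matrix (Fin 2) (Fin 2) ℝ := (g : Matrix (Fin 2) (Fin 2) ℝ) with hA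
  have hdet : A.det = 1 := g.2
  have hdet' : A 0 0 * A 1 1 - A 0 1 * A 1 0 = 1 := by
    rw [Matrix.det_fin_two] at hdet; exact hdet
  have htr' : (A 0 0 + A 1 1) ^ 2 = 4 := by
    rw [Matrix.trace_fin_two] at htr; exact htr
  have hcases : A 0 0 + A 1 1 = 2 * 1 ∨ A 0 0 + A 1 1 = 2 * (-1) := by
    have h : (A 0 0 + A 1 1 - 2) * (A 0 0 + A 1 1 + 2) = 0 := by nlinarith
    rcases mul_eq_zero.mp h with h | h
    · left; linarith
    · right; linarith
  have key : ∀ ε : ℝ, (ε = 1 ∨ ε = -1) → A 0 0 + A 1 1 = 2 * ε →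
      (ε • A ≠ 1) →
      ∃ (M : Matrix (Fin 2) (Fin 2) ℝ), M ≠ 0 ∧ M 1 1 = -(M 0 0) ∧
      ∀ n : ℕ, ((g ^ n : SL(2, ℝ)) : Matrix (Fin 2) (Fin 2) ℝ)
        = ε ^ n • (1 + (n : ℝ) • M) := by
    intro ε hε htrA hAne
    have hε2 : ε * ε = 1 := by rcases hε with h | h <;> rw [h] <;> norm_num
    set M : Matrix (Fin 2) (Fin 2) ℝ := ε • A - 1 with hM
    have e00 : M 0 0 = ε * A 0 0 - 1 := by simp [hM, Matrix.one_apply]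
    have e01 : M 0 1 = ε * A 0 1 := by simp [hM, Matrix.one_apply]
    have e10 : M 1 0 = ε * A 1 0 := by simp [hM, Matrix.one_apply]
    have e11 : M 1 1 = ε * A 1 1 - 1 := by simp [hM, Matrix.one_apply]
    have hMne : M ≠ 0 := fun h => hAne (by rw [hM] at h; exact sub_eq_zero.mp h)
    have hM11 : M 1 1 = -(M 0 0) := by
      rw [e00, e11]; linear_combination ε * htrA + 2 * hε2
    have hMM : M * M = 0 := by
      rw [Matrix.eta_fin_two M, e00, e01, e10, e11, Matrix.mul_fin_two]
      ext i j
      fin_cases i <;> fin_cases j <;> simp [Matrix.zero_apply]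
      · linear_combination (A 0 0 ^ 2 + A 0 1 * A 1 0) * hε2 - hdet' + A 0 0 * htrA
      · linear_combination (A 0 0 * A 0 1 + A 0 1 * A 1 1) * hε2 + A 0 1 * htrA
      · linear_combination (A 0 0 * A 1 0 + A 1 0 * A 1 1) * hε2 + A 1 0 * htrA
      · linear_combination (A 0 1 * A 1 0 + A 1 1 ^ 2) * hε2 - hdet' + A 1 1 * htrA
    have hAeq : A = ε • ((1 : Matrix (Fin 2) (Fin 2) ℝ) + M) := by
      have h1 : ε • ((1 : Matrix (Fin 2) (Fin 2) ℝ) + M) = (ε * ε) • A := by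
        rw [hM, smul_add, smul_sub, smul_smul]; abel
      rw [h1, hε2, one_smul]
    refine ⟨M, hMne, hM11, ?_⟩
    intro n
    induction n with
    | zero => simp
    | succ n ih =>
      have expand : ((1 : Matrix (Fin 2) (Fin 2) ℝ) + (n : ℝ) • M) * (1 + M)
          = 1 + ((n : ℝ) + 1) • M := by
        have h1 : ((1 : Matrix (Fin 2) (Fin 2) ℝ) + (n : ℝ) • M) * (1 + M)
            = 1 + (n : ℝ) • M + (M + (n : ℝ) • (M * M)) := by
          rw [mul_add, mul_one, add_mul, one_mul, smul_mul_assoc]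
        rw [h1, hMM, smul_zero, add_zero, add_smul, one_smul]
        abel
      calc ((g ^ (n + 1) : SL(2, ℝ)) : Matrix (Fin 2) (Fin 2) ℝ)
          = ((g ^ n : SL(2, ℝ)) : Matrix (Fin 2) (Fin 2) ℝ) * A := by
            rw [pow_succ]; rfl
        _ = (ε ^ n • ((1 : Matrix (Fin 2) (Fin 2) ℝ) + (n : ℝ) • M))
              * (ε • ((1 : Matrix (Fin 2) (Fin 2) ℝ) + M)) := by rw [ih, ← hAeq]
        _ = (ε ^ n * ε) • (((1 : Matrix (Fin 2) (Fin 2) ℝ) + (n : ℝ) • M) * (1 + M)) := by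
            rw [smul_mul_assoc, mul_smul_comm, smul_smul]
        _ = ε ^ (n + 1) • ((1 : Matrix (Fin 2) (Fin 2) ℝ) + ((n : ℝ) + 1) • M) := by
            rw [expand, pow_succ]
        _ = ε ^ (n + 1) • ((1 : Matrix (Fin 2) (Fin 2) ℝ) + ((n + 1 : ℕ) : ℝ) • M) := by
            norm_cast
  rcases hcases with h | h
  · obtain ⟨M, h1, h2, h3⟩ := key 1 (Or.inl rfl) h (by rw [one_smul]; exact hne1)
    exact ⟨1, M, Or.inl rfl, h1, h2, h3⟩
  · obtain ⟨M, h1, h2, h3⟩ := key (-1) (Or.inr rfl) h (by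
      intro hc
      rw [neg_one_smul] at hc
      exact hnem1 (by simpa using congrArg Neg.neg hc))
    exact ⟨-1, M, Or.inr rfl, h1, h2, h3⟩

lemma dist_smul_sl (h : SL(2, ℝ)) (z : ℍ) :
    dist z (h • z) = 2 * Real.arsinh
      (‖(z : ℂ) * ((h 1 0 : ℂ) * z + (h 1 1 : ℂ))
        - ((h 0 0 : ℂ) * z + (h 0 1 : ℂ))‖ / (2 * z.im)) := by
  set a : ℝ := h 0 0
  set b : ℝ := h 0 1
  set c : ℝ := h 1 0
  set d : ℝ := h 1 1
  have hdet : a * d - b * c = 1 := by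
    have := h.2
    rw [Matrix.det_fin_two] at this
    exact this
  set N : ℂ := (a : ℂ) * z + b with hN
  set D : ℂ := (c : ℂ) * z + d with hD
  have hzim : (0 : ℝ) < z.im := z.2
  have hD0 : D ≠ 0 := by
    intro hc
    rcases eq_or_ne c 0 with h0 | h0
    · rw [hD, h0] at hc
      simp only [Complex.ofReal_zero, zero_mul, zero_add, Complex.ofReal_eq_zero] at hc
      rw [h0, hc] at hdet
      norm_num at hdet
    · have : ((c : ℂ) * z + d).im = 0 := by rw [← hD, hc]; simp
      simp only [Complex.add_im, Complex.mul_im, Complex.ofReal_re, Complex.ofReal_im,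
        zero_mul, add_zero, zero_add] at this
      have := mul_eq_zero.mp this
      rcases this with h1 | h1
      · exact h0 (by exact_mod_cast h1)
      · exact (ne_of_gt hzim) h1
  have hcoe : ((h • z : ℍ) : ℂ) = N / D := by
    rw [UpperHalfPlane.specialLinearGroup_apply]
    simp [hN, hD]
    rfl
  have him : (h • z).im = z.im / Complex.normSq D := by
    have h1 : (h • z).im = (N / D).im := by
      rw [UpperHalfPlane.im, hcoe]
    rw [h1, Complex.div_im]
    have hNre : N.re = a * z.re + b := by simp [hN]
    have hNim : N.im = a * z.im := by simp [hN]
    have hDre : D.re = c * z.re + d := by simp [hD]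
    have hDim : D.im = c * z.im := by simp [hD]
    rw [hNre, hNim, hDre, hDim]
    have hns : Complex.normSq D ≠ 0 := by simpa using Complex.normSq_pos.mpr hD0 |>.ne'
    field_simp
    ring_nf
    nlinarith [hdet]
  rw [UpperHalfPlane.dist_eq]
  congr 1
  have habs : ‖D‖ ≠ 0 := norm_ne_zero_iff.mpr hD0
  have hsq : Real.sqrt (z.im * (h • z).im) = z.im / ‖D‖ := by
    rw [him, Complex.normSq_eq_norm_sq]
    rw [show z.im * (z.im / ‖D‖ ^ 2) = (z.im / ‖D‖) ^ 2 by
      field_simp]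
    exact Real.sqrt_sq (by positivity)
  have hdistc : dist (z : ℂ) ((h • z : ℍ) : ℂ)
      = ‖(z : ℂ) * D - N‖ / ‖D‖ := by
    rw [Complex.dist_eq, hcoe]
    rw [show (z : ℂ) - N / D = ((z : ℂ) * D - N) / D by field_simp]
    rw [norm_div]
  rw [hdistc, hsq, hN, hD]
  congr 1
  have habs' : ‖(c : ℂ) * z + d‖ ≠ 0 := habs
  field_simp
  exact mul_div_cancel_right₀ _ (by rwa [mul_comm] at habs')

lemma parabolic_not_finOrder (g : SL(2, ℝ)) (hg : IsParabolic g) : ¬IsOfFinOrder g := by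
  obtain ⟨ε, M, hε, hM0, hM11, hpow⟩ := parabolic_pow g hg
  intro hfin
  obtain ⟨n, hn, hgn⟩ := (isOfFinOrder_iff_pow_eq_one).mp hfin
  have hEq : ε ^ n • ((1 : Matrix (Fin 2) (Fin 2) ℝ) + (n : ℝ) • M) = 1 := by
    rw [← hpow n, hgn]; rfl
  have ent : ∀ i j, ε ^ n * ((1 : Matrix (Fin 2) (Fin 2) ℝ) i j + (n : ℝ) * M i j)
      = (1 : Matrix (Fin 2) (Fin 2) ℝ) i j := by
    intro i j
    have := congr_fun (congr_fun hEq i) j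
    simpa [Matrix.smul_apply, Matrix.add_apply, Matrix.smul_apply] using this
  have e00 := ent 0 0
  have e11 := ent 1 1
  simp only [Matrix.one_apply_eq] at e00 e11
  rw [hM11] at e11
  have hu : ε ^ n = 1 := by linarith
  rw [hu, one_mul] at e00 e11
  have hn' : (0 : ℝ) < (n : ℝ) := by exact_mod_cast hn
  have h00 : M 0 0 = 0 := by
    have : (n : ℝ) * M 0 0 = 0 := by linarith
    exact (mul_eq_zero.mp this).resolve_left (ne_of_gt hn')
  have e01 := ent 0 1
  have e10 := ent 1 0
  simp only [Matrix.one_apply_ne (by norm_num : (0 : Fin 2) ≠ 1),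
    Matrix.one_apply_ne (by norm_num : (1 : Fin 2) ≠ 0), hu, one_mul, zero_add] at e01 e10
  have h01 : M 0 1 = 0 := by
    have : (n : ℝ) * M 0 1 = 0 := by linarith
    exact (mul_eq_zero.mp this).resolve_left (ne_of_gt hn')
  have h10 : M 1 0 = 0 := by
    have : (n : ℝ) * M 1 0 = 0 := by linarith
    exact (mul_eq_zero.mp this).resolve_left (ne_of_gt hn')
  apply hM0
  ext i j
  fin_cases i <;> fin_cases j <;>
    simp [h00, h01, h10, hM11, Matrix.zero_apply]

lemma parabolic_dist (g : SL(2, ℝ)) (hg : IsParabolic g) (z : ℍ) :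
    ∃ C : ℝ, 0 ≤ C ∧ ∀ n : ℕ, dist z ((g ^ n) • z) = 2 * Real.arsinh ((n : ℝ) * C) := by
  obtain ⟨ε, M, hε, hM0, hM11, hpow⟩ := parabolic_pow g hg
  have hεabs : |ε| = 1 := by rcases hε with h | h <;> rw [h] <;> norm_num
  refine ⟨‖(M 1 0 : ℂ) * z * z + ((M 1 1 : ℂ) - (M 0 0 : ℂ)) * z - (M 0 1 : ℂ)‖
      / (2 * z.im), by positivity, fun n => ?_⟩
  rw [dist_smul_sl]
  have ent : ∀ i j, ((g ^ n : SL(2, ℝ)) i j : ℝ)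
      = ε ^ n * ((1 : Matrix (Fin 2) (Fin 2) ℝ) i j + (n : ℝ) * M i j) := by
    intro i j
    have := congr_fun (congr_fun (hpow n) i) j
    simpa [Matrix.smul_apply, Matrix.add_apply] using this
  have e00 := ent 0 0
  have e01 := ent 0 1
  have e10 := ent 1 0
  have e11 := ent 1 1
  simp only [Matrix.one_apply_eq, Matrix.one_apply_ne (by norm_num : (0 : Fin 2) ≠ 1),
    Matrix.one_apply_ne (by norm_num : (1 : Fin 2) ≠ 0), zero_add] at e00 e01 e10 e11
  congr 1
  rw [e00, e01, e10, e11]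
  have key : (z : ℂ) * (((ε ^ n * ((n : ℝ) * M 1 0) : ℝ) : ℂ) * z
        + ((ε ^ n * (1 + (n : ℝ) * M 1 1) : ℝ) : ℂ))
      - (((ε ^ n * (1 + (n : ℝ) * M 0 0) : ℝ) : ℂ) * z + ((ε ^ n * ((n : ℝ) * M 0 1) : ℝ) : ℂ))
      = ((ε ^ n : ℝ) : ℂ) * ((n : ℝ) : ℂ)
        * ((M 1 0 : ℂ) * z * z + ((M 1 1 : ℂ) - (M 0 0 : ℂ)) * z - (M 0 1 : ℂ)) := by
    push_cast
    ring
  rw [key]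
  rw [norm_mul, norm_mul]
  simp only [Complex.norm_real, Real.norm_eq_abs]
  rw [abs_pow, hεabs, one_pow, one_mul, Nat.abs_cast]
  rw [mul_div_assoc]

lemma arsinh_le_log_s15 (x : ℝ) (hx : 0 ≤ x) : Real.arsinh x ≤ Real.log (1 + 2 * x) := by
  rw [Real.arsinh]
  apply Real.log_le_log (by positivity)
  have h : Real.sqrt (1 + x ^ 2) ≤ 1 + x := by
    rw [show (1 : ℝ) + x = Real.sqrt ((1 + x) ^ 2) from (Real.sqrt_sq (by positivity)).symm]
    exact Real.sqrt_le_sqrt (by nlinarith)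
  linarith

/-- The weighted critical exponent `δ^{a,b}` of a group containing a parabolic element
is at least `1/(2(a+b))`. -/
theorem weighted_exponent_lower_bound_of_parabolic (G : Type*) [Group G]
    (ρ1 ρ2 : G →* SL(2, ℝ)) (o1 o2 : ℍ) (p : G)
    (hp1 : IsParabolic (ρ1 p)) (hp2 : IsParabolic (ρ2 p))
    (a b : ℝ) (ha : 0 ≤ a) (hb : 0 ≤ b) (hab : 0 < a + b) (t : ℝ)
    (hsum : Summable fun γ : G =>
      Real.exp (-t * (a * dOrb ρ1 o1 γ + b * dOrb ρ2 o2 γ))) :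
    1 / (2 * (a + b)) < t := by
  obtain ⟨C1, hC1, hd1⟩ := parabolic_dist (ρ1 p) hp1 o1
  obtain ⟨C2, hC2, hd2⟩ := parabolic_dist (ρ2 p) hp2 o2
  have hdo1 : ∀ n : ℕ, dOrb ρ1 o1 (p ^ n) = 2 * Real.arsinh ((n : ℝ) * C1) := by
    intro n; rw [dOrb, map_pow]; exact hd1 n
  have hdo2 : ∀ n : ℕ, dOrb ρ2 o2 (p ^ n) = 2 * Real.arsinh ((n : ℝ) * C2) := by
    intro n; rw [dOrb, map_pow]; exact hd2 n
  have hinjSL : Function.Injective fun n : ℕ => (ρ1 p) ^ n :=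
    injective_pow_iff_not_isOfFinOrder.mpr (parabolic_not_finOrder _ hp1)
  have hinj : Function.Injective fun n : ℕ => p ^ (n + 1) := by
    intro m k hmk
    have h1 : (ρ1 p) ^ (m + 1) = (ρ1 p) ^ (k + 1) := by
      rw [← map_pow, ← map_pow]
      exact congrArg ρ1 hmk
    have := hinjSL h1
    omega
  set f : G → ℝ := fun γ => Real.exp (-t * (a * dOrb ρ1 o1 γ + b * dOrb ρ2 o2 γ)) with hf
  have hsum2 : Summable fun n : ℕ => f (p ^ (n + 1)) := hsum.comp_injective hinj
  have ht0 : 0 < t := by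
    by_contra hcon
    push_neg at hcon
    have h1 : ∀ n : ℕ, (1 : ℝ) ≤ f (p ^ (n + 1)) := by
      intro n
      simp only [hf]
      rw [← Real.exp_zero]
      apply Real.exp_le_exp.mpr
      have hd1' : (0 : ℝ) ≤ dOrb ρ1 o1 (p ^ (n + 1)) := dist_nonneg
      have hd2' : (0 : ℝ) ≤ dOrb ρ2 o2 (p ^ (n + 1)) := dist_nonneg
      have h2 : 0 ≤ a * dOrb ρ1 o1 (p ^ (n + 1)) + b * dOrb ρ2 o2 (p ^ (n + 1)) := by positivity
      nlinarith
    have h2 := hsum2.tendsto_atTop_zero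
    have h3 := h2.eventually_lt_const (by norm_num : (0 : ℝ) < 1)
    obtain ⟨n, hn⟩ := h3.exists
    linarith [h1 n]
  set s : ℝ := 2 * t * (a + b) with hs
  set B : ℝ := -t * (a * (2 * Real.log (1 + 2 * C1)) + b * (2 * Real.log (1 + 2 * C2))) with hB
  have hbound : ∀ n : ℕ, Real.exp B * ((n : ℝ) + 1) ^ (-s) ≤ f (p ^ (n + 1)) := by
    intro n
    have hn1 : (0 : ℝ) < (n : ℝ) + 1 := by positivity
    have harsinh : ∀ C : ℝ, 0 ≤ C → Real.arsinh (((n : ℝ) + 1) * C)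
        ≤ Real.log ((n : ℝ) + 1) + Real.log (1 + 2 * C) := by
      intro C hC
      calc Real.arsinh (((n : ℝ) + 1) * C) ≤ Real.log (1 + 2 * (((n : ℝ) + 1) * C)) :=
            arsinh_le_log_s15 _ (by positivity)
        _ ≤ Real.log (((n : ℝ) + 1) * (1 + 2 * C)) := by
            apply Real.log_le_log (by positivity)
            nlinarith [Nat.cast_nonneg (α := ℝ) n]
        _ = Real.log ((n : ℝ) + 1) + Real.log (1 + 2 * C) :=
            Real.log_mul (by positivity) (by positivity)
    have h1 := harsinh C1 hC1
    have h2 := harsinh C2 hC2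
    simp only [hf]
    rw [hdo1 (n + 1), hdo2 (n + 1)]
    push_cast
    rw [Real.rpow_def_of_pos hn1, ← Real.exp_add]
    apply Real.exp_le_exp.mpr
    rw [hB, hs]
    nlinarith [mul_nonneg (mul_nonneg ht0.le ha)
        (sub_nonneg.mpr h1), mul_nonneg (mul_nonneg ht0.le hb) (sub_nonneg.mpr h2)]
  have hs1 : Summable fun n : ℕ => Real.exp B * ((n : ℝ) + 1) ^ (-s) :=
    Summable.of_nonneg_of_le (fun n => by positivity) hbound hsum2
  have hs2 : Summable fun n : ℕ => ((n : ℝ) + 1) ^ (-s) :=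
    (summable_mul_left_iff (Real.exp_pos B).ne').mp hs1
  have hs3 : Summable fun n : ℕ => ((n : ℝ)) ^ (-s) := by
    apply (summable_nat_add_iff 1).mp
    have heq : (fun n : ℕ => (((n + 1 : ℕ)) : ℝ) ^ (-s)) = fun n : ℕ => ((n : ℝ) + 1) ^ (-s) := by
      funext n; push_cast; ring_nf
    rw [heq]
    exact hs2
  have hlt : -s < -1 := Real.summable_nat_rpow.mp hs3
  rw [div_lt_iff₀ (by positivity)]
  have h1s : 1 < s := by linarith
  calc (1 : ℝ) < s := h1s
    _ = t * (2 * (a + b)) := by rw [hs]; ring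
end

section
/- Let G be a group, ρ1, ρ2 : G → SL(2,ℝ) group homomorphisms, and o1, o2 ∈ ℍ. Suppose h1, h2 > 0 are real numbers such that for every s > h1 the family γ ↦ exp(−s·d1(γ)) is summable over G, and for every s > h2 the family γ ↦ exp(−s·d2(γ)) is summable over G. Then for all a, b ≥ 0 not both zero and every s > h1·h2/(a·h2 + b·h1), the family γ ↦ exp(−s·(a·d1(γ) + b·d2(γ))) is summable over G. (The Manhattan curve lies below the chord joining (h1, 0) and (0, h2): δ^{a,b} ≤ h1·h2/(a·h2 + b·h1).) -/
open scoped MatrixGroups UpperHalfPlane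

/-- The Manhattan curve lies below the chord joining `(h1, 0)` and `(0, h2)`:
`δ^{a,b} ≤ h1·h2/(a·h2 + b·h1)`. -/
theorem manhattan_curve_below_chord (G : Type*) [Group G]
    (ρ1 ρ2 : G →* SL(2, ℝ)) (o1 o2 : ℍ) (h1 h2 : ℝ) (hh1 : 0 < h1) (hh2 : 0 < h2)
    (hsum1 : ∀ s : ℝ, h1 < s → Summable fun γ : G => Real.exp (-s * dOrb ρ1 o1 γ))
    (hsum2 : ∀ s : ℝ, h2 < s → Summable fun γ : G => Real.exp (-s * dOrb ρ2 o2 γ)) :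
    ∀ a b : ℝ, 0 ≤ a → 0 ≤ b → ¬(a = 0 ∧ b = 0) →
      ∀ s : ℝ, h1 * h2 / (a * h2 + b * h1) < s →
        Summable fun γ : G =>
          Real.exp (-s * (a * dOrb ρ1 o1 γ + b * dOrb ρ2 o2 γ)) := by
  intro a b ha hb hab s hs
  rcases eq_or_lt_of_le ha with ha0 | ha
  · -- a = 0, so b > 0
    have hb' : 0 < b := lt_of_le_of_ne hb fun h => hab ⟨ha0.symm, h.symm⟩
    subst ha0
    have hden : 0 < b * h1 := mul_pos hb' hh1
    rw [zero_mul, zero_add, div_lt_iff₀ hden] at hs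
    have hsb : h2 < s * b := by
      have := (mul_lt_mul_iff_of_pos_right hh1).mp (by linarith [hs] : h2 * h1 < (s * b) * h1)
      linarith [hs, mul_pos hh1 hh2]
    have := hsum2 (s * b) (by nlinarith)
    convert this using 2 with γ
    ring
  rcases eq_or_lt_of_le hb with hb0 | hb
  · -- b = 0, a > 0
    subst hb0
    have hden : 0 < a * h2 := mul_pos ha hh2
    rw [zero_mul, add_zero, div_lt_iff₀ hden] at hs
    have := hsum1 (s * a) (by nlinarith)
    convert this using 2 with γ
    ring
  -- main case: a, b > 0
  have hden : 0 < a * h2 + b * h1 := by positivity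
  have hs0 : 0 < s := lt_trans (div_pos (mul_pos hh1 hh2) hden) hs
  have hs' : h1 * h2 < s * (a * h2 + b * h1) := (div_lt_iff₀ hden).mp hs
  set u : ℝ := s * a / h1 with hu_def
  set v : ℝ := s * b / h2 with hv_def
  have hu : 0 < u := by positivity
  have hv : 0 < v := by positivity
  have huv : 1 < u + v := by
    rw [hu_def, hv_def, div_add_div _ _ hh1.ne' hh2.ne', lt_div_iff₀ (by positivity)]
    nlinarith
  set lo : ℝ := max 0 (1 - v) with hlo_def
  set hi : ℝ := min 1 u with hhi_def
  have hlohi : lo < hi := max_lt (lt_min one_pos hu) (lt_min (by linarith) (by linarith))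
  set l : ℝ := (lo + hi) / 2 with hl_def
  have hl_lo : lo < l := by rw [hl_def]; linarith
  have hl_hi : l < hi := by rw [hl_def]; linarith
  have hl0 : 0 < l := lt_of_le_of_lt (le_max_left 0 (1 - v)) hl_lo
  have hl1 : l < 1 := lt_of_lt_of_le hl_hi (min_le_left 1 u)
  have hlu : l < u := lt_of_lt_of_le hl_hi (min_le_right 1 u)
  have hlv : 1 - l < v := by
    have : 1 - v ≤ lo := le_max_right 0 (1 - v)
    linarith
  set s1 : ℝ := s * a / l with hs1_def
  set s2 : ℝ := s * b / (1 - l) with hs2_def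
  have hs1 : h1 < s1 := by
    rw [hs1_def, lt_div_iff₀ hl0]
    rw [hu_def, lt_div_iff₀ hh1] at hlu
    linarith
  have hs2 : h2 < s2 := by
    rw [hs2_def, lt_div_iff₀ (by linarith : (0:ℝ) < 1 - l)]
    rw [hv_def, lt_div_iff₀ hh2] at hlv
    linarith
  have hS : Summable fun γ : G =>
      l * Real.exp (-s1 * dOrb ρ1 o1 γ) + (1 - l) * Real.exp (-s2 * dOrb ρ2 o2 γ) :=
    ((hsum1 s1 hs1).mul_left l).add ((hsum2 s2 hs2).mul_left (1 - l))
  clear_value lo hi l s1 s2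
  refine Summable.of_nonneg_of_le (fun γ => (Real.exp_pos _).le) (fun γ => ?_) hS
  have key : Real.exp (-s * (a * dOrb ρ1 o1 γ + b * dOrb ρ2 o2 γ))
      = Real.exp (-s1 * dOrb ρ1 o1 γ) ^ l * Real.exp (-s2 * dOrb ρ2 o2 γ) ^ (1 - l) := by
    rw [← Real.exp_mul, ← Real.exp_mul, ← Real.exp_add]
    congr 1
    have e1 : s1 * l = s * a := by rw [hs1_def]; exact div_mul_cancel₀ _ hl0.ne'
    have e2 : s2 * (1 - l) = s * b := by rw [hs2_def]; exact div_mul_cancel₀ _ (ne_of_gt (by linarith : (0:ℝ) < 1 - l))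
    linear_combination (dOrb ρ1 o1 γ) * e1 + (dOrb ρ2 o2 γ) * e2
  rw [key]
  exact Real.geom_mean_le_arith_mean2_weighted hl0.le (by linarith) (Real.exp_pos _).le
    (Real.exp_pos _).le (by ring)
end
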